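/- arXiv:2301.05024 — 11 statements merged into one kernel-verified Lean document; each statement's English description precedes it below -/
import Mathlib

section
/- Suppose the memory kernel satisfies the exponential decay bound |K(s)| ≤ (R₀/θ) e^{−s/θ} for all s ≥ T₁, where R₀ > 0 and θ > 0. Then |Z_exp(ω) − Z(ω)| ≤ (T₁/(T₂−T₁))·R₀·(1 + θ/T₁)·e^{−T₁/θ} + R₀ e^{−T₂/θ}. -/
/-!
Since `2i sin(ω(t-s)) e^{-iωt} = e^{-iωs} - e^{-2iωt} e^{iωs}` and `e^{-2iωt}` has mean zero over
`[T₁, T₂]`, a whole number of periods, one gets, with `F(t) = ∫₀ᵗ K(s) e^{-iωs} ds` and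
`F(∞) = Z - ρ₀`,
`(T₂ - T₁)(Z_exp - Z) = ∫_{T₁}^{T₂} (F(t) - F(∞)) dt`
`                       - ∫_{T₁}^{T₂} e^{-2iωt} ∫_{T₁}^t K(s) e^{iωs} ds dt`.
In the first term `|F(t) - F(∞)| ≤ ∫_t^∞ |K| ≤ R₀ e^{-t/θ}`, which integrates to at most
`R₀ θ e^{-T₁/θ}`. In the second, exchanging the order of integration leaves the factor
`∫_s^{T₂} e^{-2iωt} dt` of modulus at most `1/ω ≤ T₁`, against `∫_{T₁}^∞ |K| ≤ R₀ e^{-T₁/θ}`.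
-/

open Real Complex MeasureTheory intervalIntegral Set

theorem integral_mul_integral_triangle_swap {𝕜 : Type*} [RCLike 𝕜] {f g : ℝ → 𝕜} {a b : ℝ}
    (hab : a ≤ b) (hf : IntegrableOn f (Ioc a b)) (hg : IntegrableOn g (Ioc a b)) :
    ∫ t in a..b, f t * ∫ s in a..t, g s = ∫ s in a..b, (∫ t in s..b, f t) * g s := by
  set μ := volume.restrict (Ioc a b)
  set φ : ℝ × ℝ → 𝕜 := {p | p.2 ≤ p.1}.indicator fun p => f p.1 * g p.2
  have hφ : Integrable φ (μ.prod μ) :=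
    (hf.mul_prod hg).indicator (measurableSet_le measurable_snd measurable_fst)
  rw [integral_of_le hab, integral_of_le hab]
  calc ∫ t in Ioc a b, f t * ∫ s in a..t, g s
      = ∫ t, ∫ s, φ (t, s) ∂μ ∂μ := by
        refine setIntegral_congr_fun measurableSet_Ioc fun t ht => ?_
        have hφt : (fun s => φ (t, s)) = (Iic t).indicator fun s => f t * g s := by
          ext s; simp only [φ, indicator_apply, mem_ofPred_eq, mem_Iic]
        rw [hφt, MeasureTheory.integral_indicator measurableSet_Iic,
          Measure.restrict_restrict measurableSet_Iic, inter_comm, Ioc_inter_Iic, min_eq_right ht.2,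
          MeasureTheory.integral_const_mul, integral_of_le ht.1.le]
    _ = ∫ s, ∫ t, φ (t, s) ∂μ ∂μ := integral_integral_swap hφ
    _ = ∫ s in Ioc a b, (∫ t in s..b, f t) * g s := by
        refine setIntegral_congr_fun measurableSet_Ioc fun s hs => ?_
        have hφs : (fun t => φ (t, s)) = (Ici s).indicator fun t => f t * g s := by
          ext t; simp only [φ, indicator_apply, mem_ofPred_eq, mem_Ici]
        have hIcc : Ici s ∩ Ioc a b = Icc s b := by
          ext t; simp only [mem_inter_iff, mem_Ici, mem_Ioc, mem_Icc]
          exact ⟨fun h => ⟨h.1, h.2.2⟩, fun h => ⟨h.1, hs.1.trans_le h.1, h.2⟩⟩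
        rw [hφs, MeasureTheory.integral_indicator measurableSet_Ici,
          Measure.restrict_restrict measurableSet_Ici, hIcc, MeasureTheory.integral_mul_const,
          integral_Icc_eq_integral_Ioc, integral_of_le hs.2]

theorem norm_exp_mul_ofReal {c : ℂ} (hc : c.re = 0) (x : ℝ) : ‖exp (c * x)‖ = 1 := by
  simp [Complex.norm_exp, hc]

theorem norm_ofReal_mul_exp_mul_ofReal {c : ℂ} (hc : c.re = 0) (x y : ℝ) :
    ‖(x : ℂ) * exp (c * y)‖ = |x| := by
  rw [norm_mul, norm_exp_mul_ofReal hc, mul_one, norm_real, Real.norm_eq_abs]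

theorem norm_integral_exp_mul_le {c : ℂ} (hc : c.re = 0) (hc0 : c ≠ 0) (a b : ℝ) :
    ‖∫ t in a..b, exp (c * t)‖ ≤ 2 / ‖c‖ := by
  rw [integral_exp_mul_complex hc0, norm_div]
  gcongr
  calc ‖exp (c * b) - exp (c * a)‖ ≤ ‖exp (c * b)‖ + ‖exp (c * a)‖ := norm_sub_le _ _
    _ = 2 := by rw [norm_exp_mul_ofReal hc, norm_exp_mul_ofReal hc]; norm_num

theorem norm_integral_exp_mul_mul_integral_le {c : ℂ} (hc : c.re = 0) (hc0 : c ≠ 0)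
    {g : ℝ → ℂ} {a b : ℝ} (hab : a ≤ b) (hg : IntegrableOn g (Ioc a b)) :
    ‖∫ t in a..b, exp (c * t) * ∫ s in a..t, g s‖ ≤ 2 / ‖c‖ * ∫ s in a..b, ‖g s‖ := by
  have hexp : Continuous fun t : ℝ => exp (c * t) := by fun_prop
  rw [integral_mul_integral_triangle_swap hab hexp.integrableOn_Ioc hg,
    ← intervalIntegral.integral_const_mul]
  refine intervalIntegral.norm_integral_le_of_norm_le hab (ae_of_all _ fun s _ => ?_)
    (((intervalIntegrable_iff_integrableOn_Ioc_of_le hab).2 hg).norm.const_mul _)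
  rw [norm_mul]
  gcongr
  exact norm_integral_exp_mul_le hc hc0 s b

theorem integral_exp_neg_div_Ioi {θ : ℝ} (hθ : 0 < θ) (t : ℝ) :
    ∫ s in Ioi t, Real.exp (-s / θ) = θ * Real.exp (-t / θ) := by
  have h := integral_exp_mul_Ioi (neg_lt_zero.2 (inv_pos.2 hθ)) t
  simp only [neg_mul, ← div_eq_inv_mul, ← neg_div] at h
  rw [h]; field_simp

theorem integrableOn_exp_neg_div_Ioi {θ : ℝ} (hθ : 0 < θ) (t : ℝ) :
    IntegrableOn (fun s => Real.exp (-s / θ)) (Ioi t) := by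
  simpa only [neg_mul, ← div_eq_inv_mul, ← neg_div] using
    integrableOn_exp_mul_Ioi (neg_lt_zero.2 (inv_pos.2 hθ)) t

theorem MeasureTheory.IntegrableOn.ofReal_mul_exp_mul {K : ℝ → ℝ} {S : Set ℝ}
    (hK : IntegrableOn K S) {c : ℂ} (hc : c.re = 0) :
    IntegrableOn (fun s => (K s : ℂ) * exp (c * s)) S :=
  hK.ofReal.mul_bdd (by fun_prop : Continuous fun s : ℝ => exp (c * s)).aestronglyMeasurable
    (ae_of_all _ fun s => (norm_exp_mul_ofReal hc s).le)

theorem intervalIntegrable_primitive {E : Type*} [NormedAddCommGroup E] [NormedSpace ℝ E]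
    {g : ℝ → E} {x₀ a b : ℝ} (hx₀ : x₀ ≤ a) (hab : a ≤ b) (hg : IntegrableOn g (Ioc x₀ b)) :
    IntervalIntegrable (fun t => ∫ s in x₀..t, g s) volume a b := by
  have hg' : IntervalIntegrable g volume x₀ b :=
    (intervalIntegrable_iff_integrableOn_Ioc_of_le (hx₀.trans hab)).2 hg
  refine ((continuousOn_primitive_interval' hg' left_mem_uIcc).mono ?_).intervalIntegrable
  exact uIcc_subset_uIcc (mem_uIcc_of_le hx₀ hab) right_mem_uIcc

theorem setIntegral_Ioi_abs_le_of_abs_le_exp {K : ℝ → ℝ} {R θ t : ℝ} (hθ : 0 < θ)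
    (hK : IntegrableOn K (Ioi t)) (hdecay : ∀ s, t ≤ s → |K s| ≤ R / θ * Real.exp (-s / θ)) :
    ∫ s in Ioi t, |K s| ≤ R * Real.exp (-t / θ) := by
  calc ∫ s in Ioi t, |K s| ≤ ∫ s in Ioi t, R / θ * Real.exp (-s / θ) :=
        setIntegral_mono_on hK.abs ((integrableOn_exp_neg_div_Ioi hθ t).const_mul _)
          measurableSet_Ioi fun s hs => hdecay s (le_of_lt hs)
    _ = R * Real.exp (-t / θ) := by
        rw [MeasureTheory.integral_const_mul, integral_exp_neg_div_Ioi hθ]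
        field_simp

theorem norm_integral_primitive_sub_mul_integral_Ioi_le {K : ℝ → ℝ} {c : ℂ} (hc : c.re = 0)
    {R θ a b : ℝ} (hθ : 0 < θ) (hR : 0 ≤ R) (ha : 0 ≤ a) (hab : a ≤ b)
    (hK : IntegrableOn K (Ioi 0)) (hdecay : ∀ s, a ≤ s → |K s| ≤ R / θ * Real.exp (-s / θ)) :
    ‖(∫ t in a..b, ∫ s in (0 : ℝ)..t, (K s : ℂ) * exp (c * s))
        - (b - a) * ∫ s in Ioi 0, (K s : ℂ) * exp (c * s)‖ ≤ R * θ * Real.exp (-a / θ) := by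
  set g : ℝ → ℂ := fun s => (K s : ℂ) * exp (c * s)
  have hg : IntegrableOn g (Ioi 0) := hK.ofReal_mul_exp_mul hc
  have htail : ∀ t ∈ Ioc a b,
      ‖(∫ s in (0 : ℝ)..t, g s) - ∫ s in Ioi 0, g s‖ ≤ R * Real.exp (-t / θ) := by
    intro t ht
    have hat : a ≤ t := ht.1.le
    rw [← integral_Ioi_sub_Ioi hg (ha.trans hat), sub_sub_cancel_left, norm_neg]
    calc ‖∫ s in Ioi t, g s‖ ≤ ∫ s in Ioi t, ‖g s‖ := norm_integral_le_integral_norm _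
      _ = ∫ s in Ioi t, |K s| := by simp only [g, norm_ofReal_mul_exp_mul_ofReal hc]
      _ ≤ R * Real.exp (-t / θ) :=
          setIntegral_Ioi_abs_le_of_abs_le_exp hθ (hK.mono_set (Ioi_subset_Ioi (ha.trans hat)))
            fun s hs => hdecay s (hat.trans hs)
  have hF := intervalIntegrable_primitive ha hab (hg.mono_set Ioc_subset_Ioi_self)
  have hexp : Continuous fun t => R * Real.exp (-t / θ) := by fun_prop
  rw [show ((b : ℂ) - a) * ∫ s in Ioi 0, g s = ∫ _ in a..b, ∫ s in Ioi 0, g s by simp,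
    ← intervalIntegral.integral_sub hF intervalIntegrable_const]
  calc _ ≤ ∫ t in a..b, R * Real.exp (-t / θ) :=
        intervalIntegral.norm_integral_le_of_norm_le hab (ae_of_all _ htail)
          (hexp.intervalIntegrable _ _)
    _ ≤ ∫ t in Ioi a, R * Real.exp (-t / θ) := by
        rw [intervalIntegral.integral_of_le hab]
        exact setIntegral_mono_set ((integrableOn_exp_neg_div_Ioi hθ a).const_mul R)
          (ae_of_all _ fun t => by positivity) Ioc_subset_Ioi_self.eventuallyLE
    _ = R * θ * Real.exp (-a / θ) := by
        rw [MeasureTheory.integral_const_mul, integral_exp_neg_div_Ioi hθ, mul_assoc]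

theorem norm_integral_exp_mul_mul_integral_le_of_abs_le_exp {K : ℝ → ℝ} {c c' : ℂ}
    (hc : c.re = 0) (hc0 : c ≠ 0) (hc' : c'.re = 0) {R θ a b : ℝ} (hθ : 0 < θ) (hab : a ≤ b)
    (hK : IntegrableOn K (Ioi a)) (hdecay : ∀ s, a ≤ s → |K s| ≤ R / θ * Real.exp (-s / θ)) :
    ‖∫ t in a..b, exp (c * t) * ∫ s in a..t, (K s : ℂ) * exp (c' * s)‖
      ≤ 2 / ‖c‖ * (R * Real.exp (-a / θ)) := by
  refine (norm_integral_exp_mul_mul_integral_le hc hc0 hab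
    ((hK.mono_set Ioc_subset_Ioi_self).ofReal_mul_exp_mul hc')).trans ?_
  gcongr
  simp only [norm_ofReal_mul_exp_mul_ofReal hc', intervalIntegral.integral_of_le hab]
  exact (setIntegral_mono_set hK.abs (ae_of_all _ fun _ => abs_nonneg _)
    Ioc_subset_Ioi_self.eventuallyLE).trans (setIntegral_Ioi_abs_le_of_abs_le_exp hθ hK hdecay)

theorem integral_exp_neg_two_mul_I_whole_periods {ω : ℝ} (hω : ω ≠ 0) (n₁ n₂ : ℕ) :
    ∫ t in (2 * π * n₁ / ω)..(2 * π * n₂ / ω), exp (-2 * I * ω * t) = 0 := by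
  have hperiod : ∀ n : ℕ, exp (-2 * I * ω * ((2 * π * n / ω : ℝ) : ℂ)) = 1 := fun n => by
    rw [Complex.exp_eq_one_iff]
    refine ⟨-2 * n, ?_⟩
    push_cast
    field_simp [ofReal_ne_zero.2 hω]
  rw [integral_exp_mul_complex (by simp [hω]), hperiod, hperiod, sub_self, zero_div]

theorem two_mul_I_mul_sin_mul_exp (ω t s : ℝ) :
    2 * I * Real.sin (ω * (t - s)) * exp (-I * ω * t)
      = exp (-I * ω * s) - exp (-2 * I * ω * t) * exp (I * ω * s) := by
  have hpos : exp (↑(ω * (t - s)) * I) * exp (-I * ω * t) = exp (-I * ω * s) := by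
    rw [← Complex.exp_add]; congr 1; push_cast; ring
  have hneg : exp (-↑(ω * (t - s)) * I) * exp (-I * ω * t)
      = exp (-2 * I * ω * t) * exp (I * ω * s) := by
    rw [← Complex.exp_add, ← Complex.exp_add]; congr 1; push_cast; ring
  rw [ofReal_sin, Complex.sin]
  linear_combination hpos - hneg + (exp (-↑(ω * (t - s)) * I) - exp (↑(ω * (t - s)) * I))
    * exp (-I * ω * t) * I_sq

noncomputable def response (ρ₀ ω : ℝ) (K : ℝ → ℝ) (t : ℝ) : ℝ :=
  ρ₀ * Real.sin (ω * t) + ∫ s in (0 : ℝ)..t, K s * Real.sin (ω * (t - s))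

theorem two_mul_I_mul_response_mul_exp {K : ℝ → ℝ} {ρ₀ ω t : ℝ}
    (hK : IntervalIntegrable K volume 0 t) :
    2 * I * (response ρ₀ ω K t : ℂ) * exp (-I * ω * t)
      = ρ₀ * (1 - exp (-2 * I * ω * t)) + (∫ s in (0 : ℝ)..t, (K s : ℂ) * exp (-I * ω * s))
        - exp (-2 * I * ω * t) * ∫ s in (0 : ℝ)..t, (K s : ℂ) * exp (I * ω * s) := by
  rw [response]
  have hexp : ∀ c : ℂ, IntervalIntegrable (fun s : ℝ => (K s : ℂ) * exp (c * s)) volume 0 t :=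
    fun c => IntervalIntegrable.mul_continuousOn ⟨hK.1.ofReal, hK.2.ofReal⟩ (by fun_prop)
  have hsin := two_mul_I_mul_sin_mul_exp ω t 0
  simp only [sub_zero, ofReal_zero, mul_zero, Complex.exp_zero, mul_one] at hsin
  push_cast at hsin
  have hconv : 2 * I * ((∫ s in (0 : ℝ)..t, K s * Real.sin (ω * (t - s)) : ℝ) : ℂ)
        * exp (-I * ω * t)
      = ∫ s in (0 : ℝ)..t, ((K s : ℂ) * exp (-I * ω * s)
          - exp (-2 * I * ω * t) * ((K s : ℂ) * exp (I * ω * s))) := by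
    rw [← intervalIntegral.integral_ofReal, ← intervalIntegral.integral_const_mul,
      ← intervalIntegral.integral_mul_const]
    refine intervalIntegral.integral_congr fun s _ => ?_
    have h := two_mul_I_mul_sin_mul_exp ω t s
    push_cast at h ⊢
    linear_combination (K s : ℂ) * h
  rw [intervalIntegral.integral_sub (hexp _) ((hexp _).const_mul _),
    intervalIntegral.integral_const_mul] at hconv
  push_cast at hconv ⊢
  linear_combination (ρ₀ : ℂ) * hsin + hconv

theorem two_mul_I_mul_integral_response_mul_exp {K : ℝ → ℝ} {ρ₀ ω T₁ T₂ : ℝ}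
    (hT₁ : 0 ≤ T₁) (hT₁₂ : T₁ ≤ T₂) (hK : IntegrableOn K (Ioc 0 T₂))
    (hperiod : ∫ t in T₁..T₂, exp (-2 * I * ω * t) = 0) :
    2 * I * ∫ t in T₁..T₂, (response ρ₀ ω K t : ℂ) * exp (-I * ω * t)
      = ρ₀ * (T₂ - T₁) + (∫ t in T₁..T₂, ∫ s in (0 : ℝ)..t, (K s : ℂ) * exp (-I * ω * s))
        - ∫ t in T₁..T₂, exp (-2 * I * ω * t) * ∫ s in T₁..t, (K s : ℂ) * exp (I * ω * s) := by
  set e : ℝ → ℂ := fun t => exp (-2 * I * ω * t)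
  set g : ℂ → ℝ → ℂ := fun c s => (K s : ℂ) * exp (c * s)
  have he : Continuous e := by fun_prop
  have hgp : IntegrableOn (g (I * ω)) (Ioc 0 T₂) := hK.ofReal_mul_exp_mul (by simp)
  have hF := intervalIntegrable_primitive hT₁ hT₁₂ (hK.ofReal_mul_exp_mul (c := -I * ω) (by simp))
  have hH := intervalIntegrable_primitive le_rfl hT₁₂ (hgp.mono_set (Ioc_subset_Ioc_left hT₁))
  have hpoint : ∀ t ∈ uIcc T₁ T₂, 2 * I * ((response ρ₀ ω K t : ℂ) * exp (-I * ω * t))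
      = ρ₀ + (∫ s in (0 : ℝ)..t, g (-I * ω) s) - e t * (∫ s in T₁..t, g (I * ω) s)
        - e t * (ρ₀ + ∫ s in (0 : ℝ)..T₁, g (I * ω) s) := by
    intro t ht
    rw [uIcc_of_le hT₁₂] at ht
    have hgp' : ∀ {a b}, 0 ≤ a → a ≤ b → b ≤ T₂ → IntervalIntegrable (g (I * ω)) volume a b :=
      fun ha hab hb => (intervalIntegrable_iff_integrableOn_Ioc_of_le hab).2
        (hgp.mono_set (Ioc_subset_Ioc ha hb))
    have hsplit := integral_add_adjacent_intervals (hgp' le_rfl hT₁ (ht.1.trans ht.2))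
      (hgp' hT₁ ht.1 ht.2)
    have hK0t : IntervalIntegrable K volume 0 t :=
      (intervalIntegrable_iff_integrableOn_Ioc_of_le (hT₁.trans ht.1)).2
        (hK.mono_set (Ioc_subset_Ioc_right ht.2))
    rw [← mul_assoc, two_mul_I_mul_response_mul_exp hK0t, ← hsplit]
    ring
  rw [← intervalIntegral.integral_const_mul, intervalIntegral.integral_congr hpoint,
    intervalIntegral.integral_sub ((intervalIntegrable_const.add hF).sub
      (hH.continuousOn_mul he.continuousOn)) ((he.intervalIntegrable _ _).mul_const _),
    intervalIntegral.integral_mul_const, hperiod, zero_mul, sub_zero,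
    intervalIntegral.integral_sub (intervalIntegrable_const.add hF)
      (hH.continuousOn_mul he.continuousOn),
    intervalIntegral.integral_add intervalIntegrable_const hF, intervalIntegral.integral_const,
    real_smul, ofReal_sub]
  ring

theorem measured_impedance_sub_impedance_eq {K : ℝ → ℝ} {ρ₀ ω T₁ T₂ : ℝ}
    (hT₁ : 0 ≤ T₁) (hT₁₂ : T₁ < T₂) (hK : IntegrableOn K (Ioi 0))
    (hperiod : ∫ t in T₁..T₂, exp (-2 * I * ω * t) = 0) :
    2 * I / ((T₂ : ℂ) - T₁) * (∫ t in T₁..T₂, (response ρ₀ ω K t : ℂ) * exp (-I * ω * t))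
        - (ρ₀ + ∫ s in Ioi 0, (K s : ℂ) * exp (-I * ω * s))
      = ((∫ t in T₁..T₂, ∫ s in (0 : ℝ)..t, (K s : ℂ) * exp (-I * ω * s))
          - ((T₂ : ℂ) - T₁) * (∫ s in Ioi 0, (K s : ℂ) * exp (-I * ω * s))
          - ∫ t in T₁..T₂, exp (-2 * I * ω * t) * ∫ s in T₁..t, (K s : ℂ) * exp (I * ω * s))
        / ((T₂ : ℂ) - T₁) := by
  have hne : (T₂ : ℂ) - T₁ ≠ 0 := sub_ne_zero.2 (ofReal_injective.ne hT₁₂.ne')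
  rw [div_mul_eq_mul_div, two_mul_I_mul_integral_response_mul_exp hT₁ hT₁₂.le
    (hK.mono_set Ioc_subset_Ioi_self) hperiod]
  field_simp
  ring

/-- **Theorem 2 (error estimate for the experimentally measured impedance).**
For an LTI system with memory kernel `K` decaying exponentially for `s ≥ T₁`,
the impedance `Z_exp` measured over the window `[T₁, T₂]`, `T₁ = 2πn₁/ω`,
`T₂ = 2πn₂/ω`, satisfies
`|Z_exp - Z| ≤ (T₁/(T₂-T₁)) R₀ (1 + θ/T₁) e^{-T₁/θ} + R₀ e^{-T₂/θ}`. -/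
theorem experimental_impedance_error_estimate
    (ω : ℝ) (hω : 0 < ω) (n₁ n₂ : ℕ) (hn₁ : 0 < n₁) (hn : n₁ < n₂)
    (T₁ T₂ : ℝ) (hT₁ : T₁ = 2 * π * n₁ / ω) (hT₂ : T₂ = 2 * π * n₂ / ω)
    (ρ₀ R₀ θ : ℝ) (hR₀ : 0 < R₀) (hθ : 0 < θ)
    (K : ℝ → ℝ) (hKmeas : Measurable K)
    (hKint : IntegrableOn (fun s => (1 + s) * |K s|) (Set.Ioi (0 : ℝ)))
    (hdecay : ∀ s, T₁ ≤ s → |K s| ≤ R₀ / θ * Real.exp (-s / θ))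
    (U : ℝ → ℝ)
    (hU : ∀ t, U t = ρ₀ * Real.sin (ω * t) + ∫ s in (0 : ℝ)..t, K s * Real.sin (ω * (t - s)))
    (Zexp Z : ℂ)
    (hZexp : Zexp = 2 * Complex.I / ((T₂ : ℂ) - T₁) *
      ∫ t in T₁..T₂, (U t : ℂ) * Complex.exp (-Complex.I * ω * t))
    (hZ : Z = (ρ₀ : ℂ) + ∫ s in Set.Ioi (0 : ℝ), (K s : ℂ) * Complex.exp (-Complex.I * ω * s)) :
    ‖Zexp - Z‖ ≤
      T₁ / (T₂ - T₁) * R₀ * (1 + θ / T₁) * Real.exp (-T₁ / θ) +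
        R₀ * Real.exp (-T₂ / θ) := by
  obtain rfl : U = response ρ₀ ω K := funext hU
  have hT₁pos : 0 < T₁ := by rw [hT₁]; positivity
  have hT₁₂ : T₁ < T₂ := by rw [hT₁, hT₂]; gcongr
  have hωT₁ : 2 / ‖-2 * I * (ω : ℂ)‖ ≤ T₁ := by
    have hn₁' : (1 : ℝ) ≤ n₁ := by exact_mod_cast hn₁
    have hnorm : ‖-2 * I * (ω : ℂ)‖ = 2 * ω := by simp [abs_of_pos hω]
    rw [hnorm, hT₁, div_le_div_iff₀ (by positivity) hω]
    exact le_mul_of_one_le_left (by positivity) (by nlinarith [Real.pi_gt_three])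
  have hK : IntegrableOn K (Ioi 0) :=
    hKint.mono' hKmeas.aestronglyMeasurable (ae_restrict_of_forall_mem measurableSet_Ioi
      fun s (hs : 0 < s) => by rw [Real.norm_eq_abs]; nlinarith [abs_nonneg (K s)])
  have hperiod : ∫ t in T₁..T₂, exp (-2 * I * ω * t) = 0 := by
    rw [hT₁, hT₂]; exact integral_exp_neg_two_mul_I_whole_periods hω.ne' n₁ n₂
  have hb₁ := norm_integral_primitive_sub_mul_integral_Ioi_le (c := -I * ω) (by simp) hθ hR₀.le
    hT₁pos.le hT₁₂.le hK hdecay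
  have hb₂ := (norm_integral_exp_mul_mul_integral_le_of_abs_le_exp (c' := I * ω) (by simp)
    (by simp [hω.ne']) (by simp) hθ hT₁₂.le (hK.mono_set (Ioi_subset_Ioi hT₁pos.le))
    hdecay).trans (mul_le_mul_of_nonneg_right hωT₁ (by positivity))
  have hden : ‖(T₂ : ℂ) - T₁‖ = T₂ - T₁ := by
    rw [← ofReal_sub, norm_real, Real.norm_of_nonneg (sub_pos.2 hT₁₂).le]
  rw [hZexp, hZ, measured_impedance_sub_impedance_eq hT₁pos.le hT₁₂ hK hperiod, norm_div, hden]
  calc _ ≤ (R₀ * θ * Real.exp (-T₁ / θ) + T₁ * (R₀ * Real.exp (-T₁ / θ))) / (T₂ - T₁) := by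
        gcongr
        exact (norm_sub_le _ _).trans (add_le_add hb₁ hb₂)
    _ = T₁ / (T₂ - T₁) * R₀ * (1 + θ / T₁) * Real.exp (-T₁ / θ) := by
        field_simp
        ring
    _ ≤ _ := le_add_of_nonneg_right (by positivity)
end

section
/- The following exact error representation holds: Z(ω) − Im(Z(ω))/(ωT) − (i/T)·Z′(ω) − Z₀(ω) = ∫_T^∞ K(s)·( e^{−iωs} + (sin(ωs) − ωs e^{−iωs})/(2πn) ) ds. -/
open Real Complex MeasureTheory intervalIntegral

/-! The measured impedance is a Fourier coefficient of the response over whole periods.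
Writing the memory term as an integral over the triangle `0 ≤ s ≤ t ≤ T` and exchanging the
order of integration, the inner integral `∫_s^T sin(ω(t-s)) e^{-iωt} dt` is elementary because
`e^{-2iωT} = 1`; it equals `T/(2i) · w(s)` with `w(s) = e^{-iωs} + (sin ωs - ωs e^{-iωs})/(ωT)`.
Hence `Z₀ = ρ₀ + ∫_0^T K w`. On the other hand `Im Z = -∫ K(s) sin ωs ds` and
`i Z'/T = (1/T) ∫ s K(s) e^{-iωs} ds`, so `Z - Im Z/(ωT) - (i/T) Z' = ρ₀ + ∫_0^∞ K w`, and the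
difference is `∫_T^∞ K w`. -/

section Triangle

variable {E : Type*} [NormedAddCommGroup E] [NormedSpace ℝ E]
  {k : ℝ → ℝ} {h : ℝ → ℝ → E} {a b : ℝ}

noncomputable def triangleIndicator (k : ℝ → ℝ) (h : ℝ → ℝ → E) : ℝ × ℝ → E :=
  {p : ℝ × ℝ | p.2 ≤ p.1}.indicator fun p => k p.2 • h p.1 p.2

theorem integrable_triangleIndicator (hk : IntegrableOn k (Set.Ioc a b))
    (hh : Continuous (Function.uncurry h)) :
    Integrable (triangleIndicator k h)
      ((volume.restrict (Set.Ioc a b)).prod (volume.restrict (Set.Ioc a b))) := by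
  obtain ⟨C, hC⟩ := (isCompact_Icc.prod isCompact_Icc).exists_bound_of_continuousOn
    (s := Set.Icc a b ×ˢ Set.Icc a b) hh.continuousOn
  have hmeas : AEStronglyMeasurable (fun p : ℝ × ℝ => k p.2 • h p.1 p.2)
      ((volume.restrict (Set.Ioc a b)).prod (volume.restrict (Set.Ioc a b))) :=
    hk.aestronglyMeasurable.comp_snd.smul hh.aestronglyMeasurable
  refine ((integrable_const C).mul_prod hk.norm).mono'
    (hmeas.indicator (measurableSet_le measurable_snd measurable_fst)) ?_
  rw [Measure.prod_restrict, ae_restrict_iff' (measurableSet_Ioc.prod measurableSet_Ioc)]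
  refine Filter.Eventually.of_forall fun p hp => ?_
  calc ‖triangleIndicator k h p‖ ≤ ‖k p.2 • h p.1 p.2‖ := norm_indicator_le_norm_self _ _
    _ ≤ C * ‖k p.2‖ := by
      rw [norm_smul, mul_comm]
      exact mul_le_mul_of_nonneg_right
        (hC (p.1, p.2) ⟨Set.Ioc_subset_Icc_self hp.1, Set.Ioc_subset_Icc_self hp.2⟩) (norm_nonneg _)

theorem setIntegral_triangleIndicator_left {t : ℝ} (ht : t ∈ Set.Ioc a b) :
    ∫ s in Set.Ioc a b, triangleIndicator k h (t, s) = ∫ s in a..t, k s • h t s := by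
  change ∫ s in Set.Ioc a b, (Set.Iic t).indicator (fun s => k s • h t s) s = _
  rw [setIntegral_indicator measurableSet_Iic, Set.Ioc_inter_Iic, inf_eq_right.2 ht.2,
    integral_of_le ht.1.le]

theorem setIntegral_triangleIndicator_right {s : ℝ} (hs : s ∈ Set.Ioc a b) :
    ∫ t in Set.Ioc a b, triangleIndicator k h (t, s) = k s • ∫ t in s..b, h t s := by
  change ∫ t in Set.Ioc a b, (Set.Ici s).indicator (fun t => k s • h t s) t = _
  have hslice : Set.Ioc a b ∩ Set.Ici s = Set.Icc s b := by
    ext t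
    simp only [Set.mem_inter_iff, Set.mem_Ioc, Set.mem_Ici, Set.mem_Icc]
    constructor
    · rintro ⟨⟨-, htb⟩, hst⟩
      exact ⟨hst, htb⟩
    · rintro ⟨hst, htb⟩
      exact ⟨⟨hs.1.trans_le hst, htb⟩, hst⟩
  rw [setIntegral_indicator measurableSet_Ici, hslice, integral_Icc_eq_integral_Ioc,
    MeasureTheory.integral_smul, integral_of_le hs.2]

variable (hk : IntegrableOn k (Set.Ioc a b)) (hh : Continuous (Function.uncurry h))
include hk hh

theorem intervalIntegrable_integral_triangle (hab : a ≤ b) :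
    IntervalIntegrable (fun t => ∫ s in a..t, k s • h t s) volume a b := by
  rw [intervalIntegrable_iff_integrableOn_Ioc_of_le hab]
  refine (integrable_triangleIndicator hk hh).integral_prod_left.congr ?_
  refine (ae_restrict_iff' measurableSet_Ioc).2 (Filter.Eventually.of_forall fun t ht => ?_)
  exact setIntegral_triangleIndicator_left ht

theorem integral_integral_triangle_swap (hab : a ≤ b) :
    ∫ t in a..b, ∫ s in a..t, k s • h t s = ∫ s in a..b, k s • ∫ t in s..b, h t s := by
  calc ∫ t in a..b, ∫ s in a..t, k s • h t s
      = ∫ t in Set.Ioc a b, ∫ s in Set.Ioc a b, triangleIndicator k h (t, s) := by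
        rw [integral_of_le hab]
        exact setIntegral_congr_fun measurableSet_Ioc fun t ht =>
          (setIntegral_triangleIndicator_left ht).symm
    _ = ∫ s in Set.Ioc a b, ∫ t in Set.Ioc a b, triangleIndicator k h (t, s) :=
        integral_integral_swap (integrable_triangleIndicator hk hh)
    _ = ∫ s in a..b, k s • ∫ t in s..b, h t s := by
        rw [integral_of_le hab]
        exact setIntegral_congr_fun measurableSet_Ioc fun s hs =>
          setIntegral_triangleIndicator_right hs

end Triangle

theorem sin_mul_sub_mul_exp (ω t s : ℝ) :
    (Real.sin (ω * (t - s)) : ℂ) * Complex.exp (-I * ω * t) =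
      (Complex.exp (-I * ω * s) - Complex.exp (I * ω * s) * Complex.exp (-2 * I * ω * t)) /
        (2 * I) := by
  rw [Complex.ofReal_sin, Complex.sin]
  push_cast
  rw [show -(ω * ((t:ℂ) - s)) * I = ((-1 : ℤ) : ℂ) * (I * (ω * t)) + I * (ω * s) by push_cast; ring,
    show (ω * ((t:ℂ) - s)) * I = I * (ω * t) + ((-1 : ℤ) : ℂ) * (I * (ω * s)) by push_cast; ring,
    show -I * ω * (t:ℂ) = ((-1 : ℤ) : ℂ) * (I * (ω * t)) by push_cast; ring,
    show -I * ω * (s:ℂ) = ((-1 : ℤ) : ℂ) * (I * (ω * s)) by push_cast; ring,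
    show -2 * I * ω * (t:ℂ) = ((-2 : ℤ) : ℂ) * (I * (ω * t)) by push_cast; ring,
    show I * ω * (s:ℂ) = I * (ω * s) by ring,
    Complex.exp_add, Complex.exp_add, Complex.exp_int_mul, Complex.exp_int_mul,
    Complex.exp_int_mul]
  have hA := Complex.exp_ne_zero (I * (ω * t))
  have hB := Complex.exp_ne_zero (I * (ω * s))
  generalize Complex.exp (I * (ω * t)) = A, Complex.exp (I * (ω * s)) = B at hA hB ⊢
  field_simp
  linear_combination (B ^ 2 - A ^ 2) * I_sq

noncomputable def measuredWeight (ω T s : ℝ) : ℂ :=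
  Complex.exp (-I * ω * s) +
    ((Real.sin (ω * s) : ℂ) - ω * s * Complex.exp (-I * ω * s)) / (ω * T)

theorem measuredWeight_zero (ω T : ℝ) : measuredWeight ω T 0 = 1 := by
  simp [measuredWeight]

theorem integral_sin_mul_sub_mul_exp {ω T : ℝ} (hω : ω ≠ 0) (hT : T ≠ 0)
    (hper : Complex.exp (-2 * I * ω * T) = 1) (s : ℝ) :
    ∫ t in s..T, (Real.sin (ω * (t - s)) : ℂ) * Complex.exp (-I * ω * t) =
      T / (2 * I) * measuredWeight ω T s := by
  have hc : -2 * I * ω ≠ 0 := by simp [hω, I_ne_zero]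
  simp_rw [sin_mul_sub_mul_exp]
  rw [intervalIntegral.integral_div, intervalIntegral.integral_sub intervalIntegrable_const
    ((by fun_prop : Continuous _).intervalIntegrable _ _), intervalIntegral.integral_const_mul,
    intervalIntegral.integral_const]
  have hsin : (Real.sin (ω * s) : ℂ) =
      (Complex.exp (-I * ω * s) - Complex.exp (I * ω * s)) * I / 2 := by
    rw [Complex.ofReal_sin, Complex.sin]; push_cast; ring_nf
  obtain ⟨B, hB, hpos, hneg, hneg2⟩ : ∃ B : ℂ, B ≠ 0 ∧ Complex.exp (I * ω * s) = B ∧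
      Complex.exp (-I * ω * s) = B⁻¹ ∧ Complex.exp (-2 * I * ω * s) = B⁻¹ ^ 2 :=
    ⟨_, Complex.exp_ne_zero _, rfl, by rw [← Complex.exp_neg]; ring_nf,
      by rw [← Complex.exp_neg, ← Complex.exp_nat_mul]; ring_nf⟩
  have hTC : (T : ℂ) ≠ 0 := by exact_mod_cast hT
  have hωC : (ω : ℂ) ≠ 0 := by exact_mod_cast hω
  rw [integral_exp_mul_complex hc, hper, measuredWeight, hsin, hpos, hneg, hneg2, Complex.real_smul]
  field_simp
  push_cast
  linear_combination (B ^ 2 - 1) * I_sq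

theorem two_mul_I_div_mul_integral_response {ω T ρ₀ : ℝ} {K U : ℝ → ℝ} (hω : ω ≠ 0) (hT : 0 < T)
    (hper : Complex.exp (-2 * I * ω * T) = 1) (hK : IntegrableOn K (Set.Ioc 0 T))
    (hU : ∀ t, U t = ρ₀ * Real.sin (ω * t) + ∫ s in (0 : ℝ)..t, K s * Real.sin (ω * (t - s))) :
    2 * I / T * ∫ t in (0 : ℝ)..T, (U t : ℂ) * Complex.exp (-I * ω * t) =
      ρ₀ + ∫ s in (0 : ℝ)..T, (K s : ℂ) * measuredWeight ω T s := by
  set h : ℝ → ℝ → ℂ := fun t s => (Real.sin (ω * (t - s)) : ℂ) * Complex.exp (-I * ω * t)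
  have hh : Continuous (Function.uncurry h) := by fun_prop
  have hpt : ∀ t, (U t : ℂ) * Complex.exp (-I * ω * t) =
      ρ₀ * h t 0 + ∫ s in (0 : ℝ)..t, K s • h t s := by
    intro t
    simp only [hU, h, sub_zero, Complex.real_smul]
    push_cast
    rw [← intervalIntegral.integral_ofReal, add_mul, mul_assoc,
      ← intervalIntegral.integral_mul_const]
    congr 2 with s
    push_cast
    ring
  have hTC : (T : ℂ) ≠ 0 := by exact_mod_cast hT.ne'
  simp_rw [hpt]
  have hρ : Continuous fun t => (ρ₀ : ℂ) * h t 0 := by fun_prop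
  rw [intervalIntegral.integral_add (hρ.intervalIntegrable _ _)
      (intervalIntegrable_integral_triangle hK hh hT.le),
    integral_integral_triangle_swap hK hh hT.le, intervalIntegral.integral_const_mul]
  simp only [h, integral_sin_mul_sub_mul_exp hω hT.ne' hper, measuredWeight_zero, Complex.real_smul]
  simp_rw [mul_left_comm (K _ : ℂ), intervalIntegral.integral_const_mul]
  field_simp

theorem norm_exp_neg_I_mul (ω s : ℝ) : ‖Complex.exp (-I * ω * s)‖ = 1 := by
  simp [Complex.norm_exp]

theorem integrableOn_ofReal_mul_exp_neg_I_mul {f : ℝ → ℝ} {S : Set ℝ} (hf : IntegrableOn f S)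
    (ω : ℝ) : IntegrableOn (fun s => (f s : ℂ) * Complex.exp (-I * ω * s)) S :=
  hf.ofReal.mul_bdd
    (by fun_prop : Continuous fun s : ℝ => Complex.exp (-I * ω * s)).aestronglyMeasurable
    (ae_of_all _ fun s => (norm_exp_neg_I_mul ω s).le)

theorem im_setIntegral_ofReal_mul_exp_neg_I_mul {f : ℝ → ℝ} {S : Set ℝ} (hf : IntegrableOn f S)
    (ω : ℝ) : (∫ s in S, (f s : ℂ) * Complex.exp (-I * ω * s)).im =
      -∫ s in S, f s * Real.sin (ω * s) := by
  calc (∫ s in S, (f s : ℂ) * Complex.exp (-I * ω * s)).im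
      = ∫ s in S, ((f s : ℂ) * Complex.exp (-I * ω * s)).im :=
        (integral_im (integrableOn_ofReal_mul_exp_neg_I_mul hf ω)).symm
    _ = ∫ s in S, -(f s * Real.sin (ω * s)) := by
        congr 1 with s
        rw [show -I * ω * s = ((-(ω * s) : ℝ) : ℂ) * I by push_cast; ring, Complex.im_ofReal_mul,
          Complex.exp_ofReal_mul_I_im, Real.sin_neg, mul_neg]
    _ = _ := integral_neg _

theorem ofReal_mul_measuredWeight {ω : ℝ} (hω : ω ≠ 0) (T : ℝ) (K : ℝ → ℝ) (s : ℝ) :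
    (K s : ℂ) * measuredWeight ω T s =
      (K s : ℂ) * Complex.exp (-I * ω * s) + 1 / (ω * T) * ((K s * Real.sin (ω * s) : ℝ) : ℂ) -
        1 / T * (((s * K s : ℝ) : ℂ) * Complex.exp (-I * ω * s)) := by
  have hωC : (ω : ℂ) ≠ 0 := by exact_mod_cast hω
  rw [measuredWeight]
  push_cast
  field_simp
  ring

theorem integrableOn_ofReal_mul_sin {K : ℝ → ℝ} {S : Set ℝ} (hK : IntegrableOn K S) (ω : ℝ) :
    IntegrableOn (fun s => ((K s * Real.sin (ω * s) : ℝ) : ℂ)) S :=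
  (hK.mul_bdd (by fun_prop : Continuous fun s => Real.sin (ω * s)).aestronglyMeasurable
    (ae_of_all _ fun s => Real.abs_sin_le_one (ω * s))).ofReal

section TrueImpedance

variable {ω : ℝ} (hω : ω ≠ 0) (T : ℝ) {K : ℝ → ℝ} {S : Set ℝ}
  (hK : IntegrableOn K S) (hsK : IntegrableOn (fun s => s * K s) S)
include hω hK hsK

theorem integrableOn_mul_measuredWeight :
    IntegrableOn (fun s => (K s : ℂ) * measuredWeight ω T s) S := by
  simp_rw [ofReal_mul_measuredWeight hω]
  exact ((integrableOn_ofReal_mul_exp_neg_I_mul hK ω).add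
    ((integrableOn_ofReal_mul_sin hK ω).const_mul _)).sub
    ((integrableOn_ofReal_mul_exp_neg_I_mul hsK ω).const_mul _)

theorem setIntegral_mul_measuredWeight :
    ∫ s in S, (K s : ℂ) * measuredWeight ω T s =
      (∫ s in S, (K s : ℂ) * Complex.exp (-I * ω * s)) -
        ((∫ s in S, (K s : ℂ) * Complex.exp (-I * ω * s)).im : ℂ) / (ω * T) -
        I / T * (-I * ∫ s in S, (s : ℂ) * K s * Complex.exp (-I * ω * s)) := by
  have hA := integrableOn_ofReal_mul_exp_neg_I_mul hK ω
  have hB := (integrableOn_ofReal_mul_sin hK ω).const_mul (1 / (ω * T) : ℂ)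
  simp_rw [ofReal_mul_measuredWeight hω]
  rw [integral_sub _ ((integrableOn_ofReal_mul_exp_neg_I_mul hsK ω).const_mul _),
    integral_add hA hB, MeasureTheory.integral_const_mul, MeasureTheory.integral_const_mul,
    integral_complex_ofReal, im_setIntegral_ofReal_mul_exp_neg_I_mul hK]
  · push_cast
    linear_combination -(∫ s in S, (s : ℂ) * K s * Complex.exp (-I * ω * s)) / T * I_sq
  · exact hA.add hB

end TrueImpedance

section MomentBound

variable {K : ℝ → ℝ} (hK : Measurable K)
  (hint : IntegrableOn (fun s => (1 + s) * |K s|) (Set.Ioi 0))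
include hK hint

theorem integrableOn_of_integrableOn_one_add_mul_abs : IntegrableOn K (Set.Ioi 0) :=
  hint.mono' hK.aestronglyMeasurable <| (ae_restrict_iff' measurableSet_Ioi).2 <|
    ae_of_all _ fun s (hs : 0 < s) => by
      rw [Real.norm_eq_abs]
      nlinarith [abs_nonneg (K s)]

theorem integrableOn_mul_of_integrableOn_one_add_mul_abs :
    IntegrableOn (fun s => s * K s) (Set.Ioi 0) :=
  hint.mono' (measurable_id.mul hK).aestronglyMeasurable <|
    (ae_restrict_iff' measurableSet_Ioi).2 <| ae_of_all _ fun s (hs : 0 < s) => by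
      rw [Real.norm_eq_abs, abs_mul, abs_of_pos hs]
      nlinarith [abs_nonneg (K s)]

end MomentBound

/-- **Exact error representation for the measured impedance.**
`Z - Im Z/(ωT) - (i/T) Z' - Z₀ = ∫_T^∞ K(s) (e^{-iωs} + (sin ωs - ωs e^{-iωs})/(2πn)) ds`. -/
theorem measured_impedance_remainder_formula
    (ω : ℝ) (hω : 0 < ω) (n : ℕ) (hn : 0 < n) (T : ℝ) (hT : T = 2 * π * n / ω)
    (ρ₀ : ℝ) (K : ℝ → ℝ) (hKmeas : Measurable K)
    (hKint : IntegrableOn (fun s => (1 + s) * |K s|) (Set.Ioi (0 : ℝ)))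
    (U : ℝ → ℝ)
    (hU : ∀ t, U t = ρ₀ * Real.sin (ω * t) + ∫ s in (0 : ℝ)..t, K s * Real.sin (ω * (t - s)))
    (Z₀ Z Z' : ℂ)
    (hZ₀ : Z₀ = 2 * Complex.I / (T : ℂ) *
      ∫ t in (0 : ℝ)..T, (U t : ℂ) * Complex.exp (-Complex.I * ω * t))
    (hZ : Z = (ρ₀ : ℂ) + ∫ s in Set.Ioi (0 : ℝ), (K s : ℂ) * Complex.exp (-Complex.I * ω * s))
    (hZ' : Z' = -Complex.I * ∫ s in Set.Ioi (0 : ℝ),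
      (s : ℂ) * (K s : ℂ) * Complex.exp (-Complex.I * ω * s)) :
    Z - (Z.im : ℂ) / ((ω : ℂ) * T) - Complex.I / (T : ℂ) * Z' - Z₀ =
      ∫ s in Set.Ioi T, (K s : ℂ) *
        (Complex.exp (-Complex.I * ω * s) +
          ((Real.sin (ω * s) : ℂ) - (ω : ℂ) * s * Complex.exp (-Complex.I * ω * s)) /
            (2 * (π : ℂ) * n)) := by
  have hT0 : 0 < T := by rw [hT]; positivity
  have hωT : (ω : ℂ) * T = 2 * π * n := by
    rw [hT]; push_cast; field_simp [hω.ne']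
  have hper : Complex.exp (-2 * I * ω * T) = 1 := by
    rw [show -2 * I * ω * T = ((-2 * n : ℤ) : ℂ) * (2 * π * I) by
      push_cast; linear_combination (-2 * I) * hωT]
    exact Complex.exp_int_mul_two_pi_mul_I _
  have hK := integrableOn_of_integrableOn_one_add_mul_abs hKmeas hKint
  have hsK := integrableOn_mul_of_integrableOn_one_add_mul_abs hKmeas hKint
  have hKw := integrableOn_mul_measuredWeight hω.ne' T hK hsK
  have hmeasured : Z₀ = ρ₀ + ∫ s in Set.Ioc 0 T, (K s : ℂ) * measuredWeight ω T s := by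
    rw [hZ₀, two_mul_I_div_mul_integral_response hω.ne' hT0 hper
      (hK.mono_set Set.Ioc_subset_Ioi_self) hU, intervalIntegral.integral_of_le hT0.le]
  have htrue : Z - (Z.im : ℂ) / ((ω : ℂ) * T) - I / T * Z' =
      ρ₀ + ∫ s in Set.Ioi 0, (K s : ℂ) * measuredWeight ω T s := by
    rw [setIntegral_mul_measuredWeight hω.ne' T hK hsK, hZ, hZ', Complex.add_im, Complex.ofReal_im]
    push_cast
    ring
  rw [htrue, hmeasured, ← Set.Ioc_union_Ioi_eq_Ioi hT0.le,
    setIntegral_union Set.Ioc_disjoint_Ioi_same measurableSet_Ioi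
      (hKw.mono_set Set.Ioc_subset_Ioi_self) (hKw.mono_set (Set.Ioi_subset_Ioi hT0.le)),
    ← hωT]
  simp only [measuredWeight]
  ring
end

section
/- For every real A with 0 < A ≤ 1 and every real x with x ≥ 1/A, one has |e^{−ix} + A·(sin x − x e^{−ix})| ≤ A x, where the absolute value denotes the complex modulus. -/
open Real Complex

theorem Complex.norm_add_mul_sub_mul_le {u s : ℂ} {A x : ℝ} (hu : ‖u‖ = 1) (hs : ‖s‖ ≤ 1)
    (hA0 : 0 ≤ A) (hA1 : A ≤ 1) (hAx : 1 ≤ A * x) :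
    ‖u + A * (s - x * u)‖ ≤ A * x := by
  have hA : ‖(A : ℂ) * s‖ ≤ A := by
    rw [norm_mul, Complex.norm_real, Real.norm_of_nonneg hA0]
    exact mul_le_of_le_one_right hA0 hs
  calc ‖u + A * (s - x * u)‖ = ‖((1 - A * x : ℝ) : ℂ) * u + A * s‖ := by
        congr 1; push_cast; ring
    _ ≤ ‖((1 - A * x : ℝ) : ℂ) * u‖ + ‖(A : ℂ) * s‖ := norm_add_le _ _
    _ ≤ (A * x - 1) + A := by
        rw [norm_mul, hu, mul_one, Complex.norm_real, Real.norm_of_nonpos (by linarith)]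
        linarith
    _ ≤ A * x := by linarith

/-- For every real `A` with `0 < A ≤ 1` and every real `x ≥ 1/A`, one has
`|e^{-ix} + A (sin x - x e^{-ix})| ≤ A x`. -/
theorem abs_exp_neg_I_add_le (A x : ℝ) (hA0 : 0 < A) (hA1 : A ≤ 1) (hx : 1 / A ≤ x) :
    ‖(Complex.exp (-Complex.I * x) +
      (A : ℂ) * ((Real.sin x : ℂ) - (x : ℂ) * Complex.exp (-Complex.I * x)))‖ ≤ A * x := by
  have hAx : 1 ≤ A * x := by rwa [div_le_iff₀' hA0] at hx
  have hexp : ‖Complex.exp (-Complex.I * x)‖ = 1 := by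
    rw [show -Complex.I * x = (-x : ℝ) * Complex.I by push_cast; ring]
    exact Complex.norm_exp_ofReal_mul_I _
  have hsin : ‖(Real.sin x : ℂ)‖ ≤ 1 := by
    rw [Complex.norm_real, Real.norm_eq_abs]
    exact Real.abs_sin_le_one x
  exact Complex.norm_add_mul_sub_mul_le hexp hsin hA0.le hA1 hAx
end

section
/- For the elementary Voigt circuit the measured impedance satisfies the exact identity Z₀(ω) = Z_V(ω) − ( Im(Z_V(ω))/(Tω) + (i/T)·Z_V′(ω) )·(1 − e^{−T/θ}), where Z_V′(ω) = −iθR/(1+iθω)². -/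
open Real Complex MeasureTheory intervalIntegral

/-!
The response to `sin (ω t)` is a steady state plus a decaying transient,
`U t = Im (Z_V e^{iωt}) - Im Z_V · e^{-t/θ}`. Over whole periods the conjugate half of the
steady state averages out, so it contributes exactly `Z_V` to `Z₀`, while the transient
contributes `-(2i/T) · Im Z_V · θ/(1+iθω) · (1 - e^{-T/θ})`. The algebraic identity
`2i · Im Z_V · θ/(1+iθω) = Im Z_V / ω + i Z_V'` puts this in the stated form.
-/

noncomputable def voigtImpedance (R θ ω : ℝ) : ℂ := R / (1 + I * θ * ω)

lemma one_add_I_mul_mul_ne_zero (θ ω : ℝ) : (1 : ℂ) + I * θ * ω ≠ 0 := by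
  intro h
  simpa using congrArg Complex.re h

lemma one_div_add_I_mul_ne_zero {θ : ℝ} (hθ : θ ≠ 0) (ω : ℝ) : (1 / θ + I * ω : ℂ) ≠ 0 := by
  intro h
  simpa [hθ] using congrArg Complex.re h

lemma integral_cexp_I_mul_mul_exp_sub_div (ω θ t : ℝ) (hθ : θ ≠ 0) :
    ∫ s in (0 : ℝ)..t, cexp (I * ω * s) * Real.exp (-(t - s) / θ) =
      θ / (1 + I * θ * ω) * (cexp (I * ω * t) - Real.exp (-t / θ)) := by
  have hθ' : (θ : ℂ) ≠ 0 := ofReal_ne_zero.mpr hθ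
  have hw := one_add_I_mul_mul_ne_zero θ ω
  have ha := one_div_add_I_mul_ne_zero hθ ω
  have hintegrand : ∀ s : ℝ, cexp (I * ω * s) * Real.exp (-(t - s) / θ) =
      cexp (-t / θ) * cexp ((1 / θ + I * ω) * s) := by
    intro s
    push_cast
    rw [← Complex.exp_add, ← Complex.exp_add]
    congr 1
    field_simp
    ring
  have hexp : cexp (-t / θ) * cexp ((1 / θ + I * ω) * t) = cexp (I * ω * t) := by
    rw [← Complex.exp_add]; congr 1; field_simp; ring
  simp_rw [hintegrand, intervalIntegral.integral_const_mul, integral_exp_mul_complex ha,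
    ofReal_zero, mul_zero, Complex.exp_zero, mul_div_assoc', mul_sub, hexp]
  push_cast at hw ⊢
  field_simp

lemma integral_sin_mul_mul_exp_eq_voigtImpedance (ω c θ t : ℝ) (hθ : θ ≠ 0) :
    ∫ s in (0 : ℝ)..t, Real.sin (ω * s) * c * Real.exp (-(t - s) / θ) =
      (voigtImpedance (c * θ) θ ω * cexp (I * ω * t)).im -
        (voigtImpedance (c * θ) θ ω).im * Real.exp (-t / θ) := by
  have him : ∀ s : ℝ, Real.sin (ω * s) * c * Real.exp (-(t - s) / θ) =
      (c * (cexp (I * ω * s) * Real.exp (-(t - s) / θ))).im := by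
    intro s
    rw [im_ofReal_mul, im_mul_ofReal,
      show I * ω * s = ((ω * s : ℝ) : ℂ) * I by push_cast; ring, exp_ofReal_mul_I_im]
    ring
  have hint : IntervalIntegrable (fun s : ℝ => c * (cexp (I * ω * s) * Real.exp (-(t - s) / θ)))
      volume 0 t := by
    apply Continuous.intervalIntegrable
    fun_prop
  have hcomm := intervalIntegral_im hint
  simp only [RCLike.im_to_complex] at hcomm
  simp_rw [him]
  rw [hcomm, intervalIntegral.integral_const_mul, integral_cexp_I_mul_mul_exp_sub_div ω θ t hθ,
    voigtImpedance, ← im_mul_ofReal, ← sub_im]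
  congr 1
  push_cast
  ring

lemma integral_im_mul_cexp_mul_cexp_neg (Z : ℂ) {ω T : ℝ} (hω : ω ≠ 0)
    (hT : cexp (-I * ω * T) = 1) :
    ∫ t in (0 : ℝ)..T, ((Z * cexp (I * ω * t)).im : ℂ) * cexp (-I * ω * t) = Z * T / (2 * I) := by
  have hintegrand : ∀ t : ℝ, ((Z * cexp (I * ω * t)).im : ℂ) * cexp (-I * ω * t) =
      Z / (2 * I) - (starRingEnd ℂ) Z / (2 * I) * cexp (-2 * I * ω * t) := by
    intro t
    have hconj : (starRingEnd ℂ) (cexp (I * ω * t)) = cexp (-I * ω * t) := by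
      rw [← Complex.exp_conj]; congr 1; simp [conj_ofReal]
    have hinv : cexp (I * ω * t) * cexp (-I * ω * t) = 1 := by
      rw [← Complex.exp_add, show I * ω * t + -I * ω * t = 0 by ring, Complex.exp_zero]
    rw [im_eq_sub_conj, map_mul, hconj,
      show -2 * I * ω * t = -I * ω * t + -I * ω * t by ring, Complex.exp_add]
    linear_combination Z / (2 * I) * hinv
  have hperiod : cexp (-2 * I * ω * T) = 1 := by
    rw [show -2 * I * ω * T = -I * ω * T + -I * ω * T by ring, Complex.exp_add, hT, one_mul]
  have hc : (-2 * I * ω : ℂ) ≠ 0 := by simp [hω]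
  have hint : IntervalIntegrable (fun t : ℝ => (starRingEnd ℂ) Z / (2 * I) * cexp (-2 * I * ω * t))
      volume 0 T := by
    apply Continuous.intervalIntegrable
    fun_prop
  simp_rw [hintegrand]
  rw [intervalIntegral.integral_sub intervalIntegrable_const hint, intervalIntegral.integral_const,
    intervalIntegral.integral_const_mul, integral_exp_mul_complex hc, hperiod]
  simp only [ofReal_zero, mul_zero, Complex.exp_zero, sub_self, zero_div, mul_zero, sub_zero,
    real_smul]
  ring

lemma integral_exp_neg_div_mul_cexp_neg (θ : ℝ) {ω T : ℝ} (hθ : θ ≠ 0)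
    (hT : cexp (-I * ω * T) = 1) :
    ∫ t in (0 : ℝ)..T, (Real.exp (-t / θ) : ℂ) * cexp (-I * ω * t) =
      θ / (1 + I * θ * ω) * (1 - Real.exp (-T / θ)) := by
  have hθ' : (θ : ℂ) ≠ 0 := ofReal_ne_zero.mpr hθ
  have hw := one_add_I_mul_mul_ne_zero θ ω
  have hc : -(1 / θ + I * ω : ℂ) ≠ 0 := neg_ne_zero.mpr (one_div_add_I_mul_ne_zero hθ ω)
  have hexp : ∀ t : ℝ, (Real.exp (-t / θ) : ℂ) * cexp (-I * ω * t) =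
      cexp (-(1 / θ + I * ω) * t) := by
    intro t
    push_cast
    rw [← Complex.exp_add]
    congr 1
    ring
  have hend : cexp (-(1 / θ + I * ω) * T) = Real.exp (-T / θ) := by
    rw [← hexp, hT, mul_one]
  simp_rw [hexp]
  rw [integral_exp_mul_complex hc, hend]
  simp only [ofReal_zero, mul_zero, Complex.exp_zero]
  push_cast at hw ⊢
  field_simp
  ring

lemma integral_voigtResponse_mul_cexp_neg (Z : ℂ) {ω θ T : ℝ} (hω : ω ≠ 0) (hθ : θ ≠ 0)
    (hT : cexp (-I * ω * T) = 1) :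
    ∫ t in (0 : ℝ)..T,
        (((Z * cexp (I * ω * t)).im - Z.im * Real.exp (-t / θ) : ℝ) : ℂ) * cexp (-I * ω * t) =
      Z * T / (2 * I) - Z.im * (θ / (1 + I * θ * ω) * (1 - Real.exp (-T / θ))) := by
  have hint : ∀ f : ℝ → ℂ, Continuous f →
      IntervalIntegrable (fun t => f t * cexp (-I * ω * t)) volume 0 T := fun f hf =>
    (hf.mul (by fun_prop)).intervalIntegrable 0 T
  simp_rw [ofReal_sub, ofReal_mul, sub_mul, mul_assoc (Z.im : ℂ)]
  rw [intervalIntegral.integral_sub (hint _ (by fun_prop)) ((hint _ (by fun_prop)).const_mul _),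
    intervalIntegral.integral_const_mul, integral_im_mul_cexp_mul_cexp_neg Z hω hT,
    integral_exp_neg_div_mul_cexp_neg θ hθ hT]

lemma voigtImpedance_im (R θ ω : ℝ) :
    (voigtImpedance R θ ω).im = -(R * θ * ω) / (1 + θ ^ 2 * ω ^ 2) := by
  simp only [voigtImpedance, div_im, normSq_apply, add_re, add_im, mul_re, mul_im, one_re, one_im,
    I_re, I_im, ofReal_re, ofReal_im]
  ring

lemma two_I_mul_im_voigtImpedance_mul (R θ ω : ℝ) (hω : ω ≠ 0) :
    2 * I * (voigtImpedance R θ ω).im * (θ / (1 + I * θ * ω)) =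
      (voigtImpedance R θ ω).im / ω + I * (-I * θ * R / (1 + I * θ * ω) ^ 2) := by
  have hw := one_add_I_mul_mul_ne_zero θ ω
  have hw' : (1 : ℂ) - I * θ * ω ≠ 0 := by
    simpa [sub_eq_add_neg] using one_add_I_mul_mul_ne_zero θ (-ω)
  have hω' : (ω : ℂ) ≠ 0 := ofReal_ne_zero.mpr hω
  have hd : (1 + θ ^ 2 * ω ^ 2 : ℂ) = (1 + I * θ * ω) * (1 - I * θ * ω) := by
    linear_combination (θ : ℂ) ^ 2 * ω ^ 2 * I_sq
  rw [voigtImpedance_im]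
  push_cast
  rw [hd]
  field_simp
  linear_combination (R : ℂ) * θ * (1 - I * θ * ω) * I_sq

/-- **Exact identity for the measured impedance of an elementary Voigt circuit.**
`Z₀(ω) = Z_V(ω) - (Im(Z_V(ω))/(Tω) + (i/T) Z_V'(ω)) (1 - e^{-T/θ})`,
where `Z_V(ω) = R/(1+iθω)`, `θ = RC`, and `Z_V'(ω) = -iθR/(1+iθω)²`. -/
theorem voigt_measured_impedance_identity
    (ω : ℝ) (hω : 0 < ω) (n : ℕ) (hn : 0 < n) (T : ℝ) (hT : T = 2 * π * n / ω)
    (R C θ : ℝ) (hR : 0 < R) (hC : 0 < C) (hθ : θ = R * C)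
    (U : ℝ → ℝ)
    (hU : ∀ t, U t = ∫ s in (0 : ℝ)..t, Real.sin (ω * s) * (1 / C) * Real.exp (-(t - s) / θ))
    (Z₀ ZV ZV' : ℂ)
    (hZ₀ : Z₀ = 2 * Complex.I / (T : ℂ) *
      ∫ t in (0 : ℝ)..T, (U t : ℂ) * Complex.exp (-Complex.I * ω * t))
    (hZV : ZV = (R : ℂ) / (1 + Complex.I * θ * ω))
    (hZV' : ZV' = -Complex.I * θ * R / (1 + Complex.I * θ * ω) ^ 2) :
    Z₀ = ZV - ((ZV.im : ℂ) / ((T : ℂ) * ω) + Complex.I / (T : ℂ) * ZV') *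
      (1 - Real.exp (-T / θ)) := by
  have hθ0 : θ ≠ 0 := hθ ▸ mul_ne_zero hR.ne' hC.ne'
  have hZVdef : ZV = voigtImpedance R θ ω := hZV
  have hT0 : (T : ℂ) ≠ 0 := ofReal_ne_zero.mpr (by rw [hT]; positivity)
  have hperiod : cexp (-I * ω * T) = 1 := by
    rw [← Complex.exp_int_mul_two_pi_mul_I (-n)]
    congr 1
    rw [hT]
    push_cast
    field_simp [hω.ne']
  have hresponse : ∀ t, U t = (ZV * cexp (I * ω * t)).im - ZV.im * Real.exp (-t / θ) := by
    intro t
    have hRθ : 1 / C * θ = R := by rw [hθ]; field_simp [hC.ne']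
    rw [hU, integral_sin_mul_mul_exp_eq_voigtImpedance ω (1 / C) θ t hθ0, hRθ, hZVdef]
  have hcoeff : ∫ t in (0 : ℝ)..T, (U t : ℂ) * cexp (-I * ω * t) =
      ZV * T / (2 * I) - ZV.im * (θ / (1 + I * θ * ω) * (1 - Real.exp (-T / θ))) := by
    simp_rw [hresponse]
    exact integral_voigtResponse_mul_cexp_neg ZV hω.ne' hθ0 hperiod
  have hcombine : (ZV.im : ℂ) / (T * ω) + I / T * ZV' =
      2 * I * ZV.im * (θ / (1 + I * θ * ω)) / T := by
    rw [hZV', hZVdef, two_I_mul_im_voigtImpedance_mul R θ ω hω.ne']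
    ring
  rw [hZ₀, hcoeff, hcombine]
  field_simp
end

section
/- For the exponential-drift model with ρ_R ≠ ρ_C, one has for all real s and t: −∫_s^t dx/θ(x) = (τ/θ₊)·[ (s−t)/τ + κ_C·ln( (ρ_C e^{−s/τ}+1)/(ρ_C e^{−t/τ}+1) ) + κ_R·ln( (ρ_R e^{−s/τ}+1)/(ρ_R e^{−t/τ}+1) ) ]. -/
open Real MeasureTheory intervalIntegral

/-! In the variable `u = exp (-t / τ)` the drift reads `R = R₊ (ρ_R u + 1) / (a u + 1)`, and
similarly for `C`, so `θ₊ / θ = (a u + 1) (b u + 1) / ((ρ_R u + 1) (ρ_C u + 1))`. Partial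
fractions split this into `1` minus multiples `κ` of the weights `ρ u / (ρ u + 1)`, and
`-τ log (ρ u + 1)` is an antiderivative of such a weight in `t`. -/

theorem partial_fractions_quadratic_ratio {a b p q u : ℝ} (hpq : p ≠ q) (hp : p ≠ 0) (hq : q ≠ 0)
    (hpu : p * u + 1 ≠ 0) (hqu : q * u + 1 ≠ 0) :
    (a * u + 1) * (b * u + 1) / ((p * u + 1) * (q * u + 1)) =
      1 - (a - q) * (b - q) / (q * (q - p)) * (q * u / (q * u + 1))
        - (a - p) * (b - p) / (p * (p - q)) * (p * u / (p * u + 1)) := by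
  rw [← sub_ne_zero] at hpq
  have hqp : q - p ≠ 0 := by rwa [← neg_sub, neg_ne_zero]
  -- `field_simp` writes these denominators as `u * p + 1`, `u * q + 1`.
  rw [mul_comm] at hpu hqu
  field_simp
  ring

theorem drift_eq_mul_div_exp_neg {a m p τ : ℝ} (t : ℝ) (ha : 0 ≤ a) (hp : p ≠ 0) :
    (a * m + p * exp (t / τ)) / (a + exp (t / τ)) =
      p * (a * m / p * exp (-t / τ) + 1) / (a * exp (-t / τ) + 1) := by
  rw [neg_div, exp_neg]
  field_simp

section LogisticWeight

variable {ρ τ : ℝ}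

theorem continuous_mul_exp_div_add_one (hρ : 0 ≤ ρ) :
    Continuous fun x => ρ * exp (-x / τ) / (ρ * exp (-x / τ) + 1) :=
  Continuous.div (by fun_prop) (by fun_prop) fun x => by positivity

theorem hasDerivAt_log_mul_exp_add_one (hρ : 0 ≤ ρ) (x : ℝ) :
    HasDerivAt (fun y => log (ρ * exp (-y / τ) + 1))
      (-(ρ * exp (-x / τ) / (ρ * exp (-x / τ) + 1)) / τ) x := by
  have hexp : HasDerivAt (fun y => exp (-y / τ)) (exp (-x / τ) * (-1 / τ)) x :=
    ((hasDerivAt_id x).neg.div_const τ).exp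
  convert ((hexp.const_mul ρ).add_const 1).log (by positivity) using 1
  ring

theorem integral_mul_exp_div_add_one (hρ : 0 ≤ ρ) (hτ : τ ≠ 0) (s t : ℝ) :
    ∫ x in s..t, ρ * exp (-x / τ) / (ρ * exp (-x / τ) + 1) =
      τ * log ((ρ * exp (-s / τ) + 1) / (ρ * exp (-t / τ) + 1)) := by
  have hderiv (x : ℝ) : HasDerivAt (fun y => -τ * log (ρ * exp (-y / τ) + 1))
      (ρ * exp (-x / τ) / (ρ * exp (-x / τ) + 1)) x :=
    ((hasDerivAt_log_mul_exp_add_one hρ x).const_mul (-τ)).congr_deriv (by field_simp)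
  rw [integral_eq_sub_of_hasDerivAt (fun x _ => hderiv x)
    ((continuous_mul_exp_div_add_one hρ).intervalIntegrable s t),
    log_div (by positivity) (by positivity)]
  ring

end LogisticWeight

/-- **Explicit integral of the inverse relaxation time in the exponential-drift model**
(case `ρ_R ≠ ρ_C`). -/
theorem exponential_drift_inverse_relaxation_integral
    (a b τ Rm Rp Cm Cp : ℝ)
    (ha : 0 < a) (hb : 0 < b) (hτ : 0 < τ)
    (hRm : 0 < Rm) (hRp : 0 < Rp) (hCm : 0 < Cm) (hCp : 0 < Cp)
    (R C θ : ℝ → ℝ)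
    (hR : ∀ t, R t = (a * Rm + Rp * Real.exp (t / τ)) / (a + Real.exp (t / τ)))
    (hC : ∀ t, C t = (b * Cm + Cp * Real.exp (t / τ)) / (b + Real.exp (t / τ)))
    (hθ : ∀ t, θ t = R t * C t)
    (θp ρR ρC κC κR : ℝ)
    (hθp : θp = Rp * Cp)
    (hρR : ρR = a * Rm / Rp) (hρC : ρC = b * Cm / Cp) (hρ : ρR ≠ ρC)
    (hκC : κC = (a - ρC) * (b - ρC) / (ρC * (ρC - ρR)))
    (hκR : κR = (a - ρR) * (b - ρR) / (ρR * (ρR - ρC))) :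
    ∀ s t : ℝ,
      -(∫ x in s..t, 1 / θ x) =
        (τ / θp) * ((s - t) / τ +
          κC * Real.log ((ρC * Real.exp (-s / τ) + 1) / (ρC * Real.exp (-t / τ) + 1)) +
          κR * Real.log ((ρR * Real.exp (-s / τ) + 1) / (ρR * Real.exp (-t / τ) + 1))) := by
  intro s t
  have hρR₀ : 0 < ρR := hρR ▸ by positivity
  have hρC₀ : 0 < ρC := hρC ▸ by positivity
  have hinv (x : ℝ) : 1 / θ x = 1 / θp * (1
      - κC * (ρC * exp (-x / τ) / (ρC * exp (-x / τ) + 1))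
      - κR * (ρR * exp (-x / τ) / (ρR * exp (-x / τ) + 1))) := by
    rw [hθ, hR, hC, drift_eq_mul_div_exp_neg x ha.le hRp.ne',
      drift_eq_mul_div_exp_neg x hb.le hCp.ne', ← hρR, ← hρC, hκC, hκR,
      ← partial_fractions_quadratic_ratio hρ hρR₀.ne' hρC₀.ne' (by positivity) (by positivity),
      hθp]
    field_simp
  have hweight {ρ : ℝ} (hρ₀ : 0 < ρ) (κ : ℝ) : IntervalIntegrable
      (fun x => κ * (ρ * exp (-x / τ) / (ρ * exp (-x / τ) + 1))) volume s t :=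
    ((continuous_mul_exp_div_add_one hρ₀.le).intervalIntegrable s t).const_mul κ
  rw [integral_congr fun x _ => hinv x, intervalIntegral.integral_const_mul,
    intervalIntegral.integral_sub (intervalIntegrable_const.sub (hweight hρC₀ κC))
      (hweight hρR₀ κR),
    intervalIntegral.integral_sub intervalIntegrable_const (hweight hρC₀ κC),
    intervalIntegral.integral_const, intervalIntegral.integral_const_mul,
    intervalIntegral.integral_const_mul,
    integral_mul_exp_div_add_one hρC₀.le hτ.ne', integral_mul_exp_div_add_one hρR₀.le hτ.ne']
  field_simp
  ring
end

section
/- For the exponential-drift model with ρ_R = ρ_C = ρ, one has for all real s and t: −∫_s^t dx/θ(x) = (τ/θ₊)·[ (s−t)/τ + α·ln( (ρ e^{−s/τ}+1)/(ρ e^{−t/τ}+1) ) + β·(e^{−s/τ} − e^{−t/τ})/((ρ e^{−s/τ}+1)(ρ e^{−t/τ}+1)) ], where α = 1 − θ₊/θ₋ and β = (a−ρ)(b−ρ)/ρ. -/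
open Real MeasureTheory intervalIntegral

/-!
Write `u = e^{-x/τ}`. Since `a R₋ = ρ R₊` and `b C₋ = ρ C₊`, both `R` and `C` acquire the factor
`ρ u + 1`, so `1 / θ = (a u + 1)(b u + 1) / (θ₊ (ρ u + 1)²)`. In partial fractions this is
`(1 - α ρ u / (ρ u + 1) - β u / (ρ u + 1)²) / θ₊`, which is the `x`-derivative of
`x + τ (α log (ρ u + 1) - β / (ρ (ρ u + 1)))`; the formula is the fundamental theorem of calculus.
-/

theorem mul_add_mul_div_add_eq {a m p ρ u : ℝ} (hu : u ≠ 0) (h : a * m = ρ * p) :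
    (a * m + p * u) / (a + u) = p * (ρ * u⁻¹ + 1) / (a * u⁻¹ + 1) := by
  rw [h, ← mul_div_mul_right _ _ (inv_ne_zero hu)]
  congr 1 <;> field_simp

theorem one_sub_div_sub_div_sq_eq {a b ρ e : ℝ} (hρ : ρ ≠ 0) (he : ρ * e + 1 ≠ 0) :
    1 - (1 - a * b / ρ ^ 2) * ρ * e / (ρ * e + 1) - (a - ρ) * (b - ρ) / ρ * e / (ρ * e + 1) ^ 2 =
      (a * e + 1) * (b * e + 1) / (ρ * e + 1) ^ 2 := by
  field_simp
  ring

noncomputable def relaxationPotential (τ ρ α β y : ℝ) : ℝ :=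
  y + τ * (α * log (ρ * exp (-y / τ) + 1) - β / (ρ * (ρ * exp (-y / τ) + 1)))

theorem hasDerivAt_relaxationPotential {τ ρ : ℝ} (hτ : τ ≠ 0) (hρ : 0 < ρ) (α β x : ℝ) :
    HasDerivAt (relaxationPotential τ ρ α β)
      (1 - α * ρ * exp (-x / τ) / (ρ * exp (-x / τ) + 1)
        - β * exp (-x / τ) / (ρ * exp (-x / τ) + 1) ^ 2) x := by
  have hA : 0 < ρ * exp (-x / τ) + 1 := by positivity
  have hinner : HasDerivAt (fun y => ρ * exp (-y / τ) + 1) (ρ * (exp (-x / τ) * (-1 / τ))) x :=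
    ((((hasDerivAt_id x).neg.div_const τ).exp).const_mul ρ).add_const 1
  have H := (hasDerivAt_id x).add
    ((((hinner.log hA.ne').const_mul α).sub
      ((hasDerivAt_const x β).div (hinner.const_mul ρ) (by positivity))).const_mul τ)
  refine H.congr_deriv ?_
  field_simp
  ring

theorem relaxationPotential_sub_relaxationPotential {τ ρ : ℝ} (hτ : τ ≠ 0) (hρ : 0 < ρ)
    (α β s t : ℝ) :
    relaxationPotential τ ρ α β s - relaxationPotential τ ρ α β t =
      τ * ((s - t) / τ +
        α * log ((ρ * exp (-s / τ) + 1) / (ρ * exp (-t / τ) + 1)) +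
        β * (exp (-s / τ) - exp (-t / τ)) /
          ((ρ * exp (-s / τ) + 1) * (ρ * exp (-t / τ) + 1))) := by
  have hs : 0 < ρ * exp (-s / τ) + 1 := by positivity
  have ht : 0 < ρ * exp (-t / τ) + 1 := by positivity
  rw [log_div hs.ne' ht.ne']
  unfold relaxationPotential
  field_simp
  ring

theorem integral_add_one_mul_add_one_div_sq_exp {τ ρ : ℝ} (hτ : τ ≠ 0) (hρ : 0 < ρ) (a b s t : ℝ) :
    ∫ x in s..t, (a * exp (-x / τ) + 1) * (b * exp (-x / τ) + 1) / (ρ * exp (-x / τ) + 1) ^ 2 =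
      relaxationPotential τ ρ (1 - a * b / ρ ^ 2) ((a - ρ) * (b - ρ) / ρ) t -
        relaxationPotential τ ρ (1 - a * b / ρ ^ 2) ((a - ρ) * (b - ρ) / ρ) s := by
  have hA : ∀ x, ρ * exp (-x / τ) + 1 ≠ 0 := fun x => by positivity
  refine integral_eq_sub_of_hasDerivAt (fun x _ => ?_) (Continuous.intervalIntegrable ?_ s t)
  · rw [← one_sub_div_sub_div_sq_eq hρ.ne' (hA x)]
    exact hasDerivAt_relaxationPotential hτ hρ _ _ x
  · exact Continuous.div (by fun_prop) (by fun_prop) fun x => pow_ne_zero 2 (hA x)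

theorem exponential_drift_inverse_relaxation_integral_degenerate_general
    (a b τ Rm Rp Cm Cp : ℝ)
    (ha : 0 < a) (hτ : 0 < τ)
    (hRm : 0 < Rm) (hRp : 0 < Rp) (hCm : 0 < Cm) (hCp : 0 < Cp)
    (R C θ : ℝ → ℝ)
    (hR : ∀ t, R t = (a * Rm + Rp * Real.exp (t / τ)) / (a + Real.exp (t / τ)))
    (hC : ∀ t, C t = (b * Cm + Cp * Real.exp (t / τ)) / (b + Real.exp (t / τ)))
    (hθ : ∀ t, θ t = R t * C t)
    (θp θm ρ α β : ℝ)
    (hθp : θp = Rp * Cp) (hθm : θm = Rm * Cm)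
    (hρR : a * Rm / Rp = ρ) (hρC : b * Cm / Cp = ρ)
    (hα : α = 1 - θp / θm) (hβ : β = (a - ρ) * (b - ρ) / ρ) :
    ∀ s t : ℝ,
      -(∫ x in s..t, 1 / θ x) =
        (τ / θp) * ((s - t) / τ +
          α * Real.log ((ρ * Real.exp (-s / τ) + 1) / (ρ * Real.exp (-t / τ) + 1)) +
          β * (Real.exp (-s / τ) - Real.exp (-t / τ)) /
            ((ρ * Real.exp (-s / τ) + 1) * (ρ * Real.exp (-t / τ) + 1))) := by
  intro s t
  have hρ : 0 < ρ := hρR ▸ by positivity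
  have hRm' : a * Rm = ρ * Rp := by rw [← hρR]; field_simp
  have hCm' : b * Cm = ρ * Cp := by rw [← hρC]; field_simp
  have hα' : α = 1 - a * b / ρ ^ 2 := by
    rw [hα, hθp, hθm]
    field_simp
    linear_combination b * Cm * hRm' + ρ * Rp * hCm'
  have hθinv : ∀ x, 1 / θ x = θp⁻¹ *
      ((a * exp (-x / τ) + 1) * (b * exp (-x / τ) + 1) / (ρ * exp (-x / τ) + 1) ^ 2) := by
    intro x
    have hu : exp (x / τ) ≠ 0 := (exp_pos _).ne'
    have hA : ρ * (exp (x / τ))⁻¹ + 1 ≠ 0 := by positivity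
    rw [hθ, hR, hC, mul_add_mul_div_add_eq hu hRm', mul_add_mul_div_add_eq hu hCm', hθp,
      neg_div, exp_neg]
    field_simp
  simp_rw [hθinv, intervalIntegral.integral_const_mul,
    integral_add_one_mul_add_one_div_sq_exp hτ.ne' hρ, ← hα', ← hβ]
  rw [neg_mul_eq_mul_neg, neg_sub, relaxationPotential_sub_relaxationPotential hτ.ne' hρ]
  ring

/-- **Explicit integral of the inverse relaxation time in the exponential-drift model**
(degenerate case `ρ_R = ρ_C = ρ`). -/
theorem exponential_drift_inverse_relaxation_integral_degenerate
    (a b τ Rm Rp Cm Cp : ℝ)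
    (ha : 0 < a) (hb : 0 < b) (hτ : 0 < τ)
    (hRm : 0 < Rm) (hRp : 0 < Rp) (hCm : 0 < Cm) (hCp : 0 < Cp)
    (R C θ : ℝ → ℝ)
    (hR : ∀ t, R t = (a * Rm + Rp * Real.exp (t / τ)) / (a + Real.exp (t / τ)))
    (hC : ∀ t, C t = (b * Cm + Cp * Real.exp (t / τ)) / (b + Real.exp (t / τ)))
    (hθ : ∀ t, θ t = R t * C t)
    (θp θm ρ α β : ℝ)
    (hθp : θp = Rp * Cp) (hθm : θm = Rm * Cm)
    (hρR : a * Rm / Rp = ρ) (hρC : b * Cm / Cp = ρ)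
    (hα : α = 1 - θp / θm) (hβ : β = (a - ρ) * (b - ρ) / ρ) :
    ∀ s t : ℝ,
      -(∫ x in s..t, 1 / θ x) =
        (τ / θp) * ((s - t) / τ +
          α * Real.log ((ρ * Real.exp (-s / τ) + 1) / (ρ * Real.exp (-t / τ) + 1)) +
          β * (Real.exp (-s / τ) - Real.exp (-t / τ)) /
            ((ρ * Real.exp (-s / τ) + 1) * (ρ * Real.exp (-t / τ) + 1))) :=
  exponential_drift_inverse_relaxation_integral_degenerate_general a b τ Rm Rp Cm Cp ha hτ hRm hRp
    hCm hCp R C θ hR hC hθ θp θm ρ α β hθp hθm hρR hρC hα hβ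
end

section
/- Let θ : ℝ → (0,∞) be continuously differentiable with θ(x) ≤ M_θ for all x and with L = sup_x |(1/θ)′(x)| < ∞. Then for every ε > 0 and all 0 ≤ ξ ≤ η one has | exp( −(1/ε) ∫_ξ^η dσ/θ(σ) ) − exp( −(η−ξ)/(ε θ(η)) ) | ≤ (L (η−ξ)²/(2ε)) · exp( −(η−ξ)/(M_θ ε) ). -/
/-!
Write `I = ∫_ξ^η dσ/θ(σ)`, so the two kernels are `exp(-I/ε)` and `exp(-(η-ξ)/(εθ(η)))`.
Both exponents are at least `(η-ξ)/(M_θ ε)` because `1/θ ≥ 1/M_θ`, and on that half-line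
`exp(-·)` is Lipschitz with constant `exp(-(η-ξ)/(M_θ ε))`. The exponents differ by
`(1/ε)∫_ξ^η (1/θ(σ) - 1/θ(η)) dσ`, and since `1/θ` is `L`-Lipschitz this is at most
`(L/ε)∫_ξ^η (η-σ) dσ = L(η-ξ)²/(2ε)`.
-/

open Real MeasureTheory intervalIntegral Set

lemma abs_exp_neg_sub_exp_neg_le {a b c : ℝ} (ha : c ≤ a) (hb : c ≤ b) :
    |exp (-a) - exp (-b)| ≤ |a - b| * exp (-c) := by
  wlog hab : a ≤ b generalizing a b
  · rw [abs_sub_comm, abs_sub_comm a]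
    exact this hb ha (le_of_not_ge hab)
  have hfactor : exp (-a) - exp (-b) = exp (-a) * (1 - exp (-(b - a))) := by
    rw [mul_sub, ← exp_add]; ring_nf
  have hone : 1 - exp (-(b - a)) ≤ b - a := by linarith [add_one_le_exp (-(b - a))]
  have hnonneg : 0 ≤ 1 - exp (-(b - a)) := sub_nonneg.2 (exp_le_one_iff.2 (by linarith))
  rw [hfactor, abs_of_nonneg (mul_nonneg (exp_pos _).le hnonneg), abs_sub_comm,
    abs_of_nonneg (sub_nonneg.2 hab), mul_comm (b - a)]
  exact mul_le_mul (exp_le_exp.2 (by linarith)) hone hnonneg (exp_pos _).le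

lemma abs_integral_sub_mul_right_le {f : ℝ → ℝ} {a b K : ℝ} (hab : a ≤ b)
    (hf : IntervalIntegrable f volume a b) (hK : ∀ x ∈ Icc a b, |f x - f b| ≤ K * (b - x)) :
    |(∫ x in a..b, f x) - (b - a) * f b| ≤ K * (b - a) ^ 2 / 2 := by
  have hsub : (∫ x in a..b, f x) - (b - a) * f b = ∫ x in a..b, (f x - f b) := by
    rw [integral_sub hf intervalIntegrable_const, intervalIntegral.integral_const, smul_eq_mul]
  rw [hsub, ← Real.norm_eq_abs]
  calc ‖∫ x in a..b, (f x - f b)‖ ≤ ∫ x in a..b, K * (b - x) :=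
        norm_integral_le_of_norm_le hab (ae_of_all _ fun x hx => hK x (Ioc_subset_Icc_self hx))
          ((by fun_prop : Continuous fun x => K * (b - x)).intervalIntegrable _ _)
    _ = K * (b - a) ^ 2 / 2 := by
        rw [intervalIntegral.integral_const_mul,
          integral_sub intervalIntegrable_const intervalIntegrable_id,
          intervalIntegral.integral_const, integral_id, smul_eq_mul]
        ring

theorem frozen_relaxation_kernel_estimate_general
    (θ : ℝ → ℝ) (hθC1 : ContDiff ℝ 1 θ) (hθpos : ∀ x, 0 < θ x)
    (Mθ : ℝ) (hMθ : ∀ x, θ x ≤ Mθ)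
    (L : ℝ) (hL : ∀ x, |deriv (fun y => 1 / θ y) x| ≤ L)
    (ε : ℝ) (hε : 0 < ε) (ξ η : ℝ) (hξη : ξ ≤ η) :
    |Real.exp (-(1 / ε) * ∫ σ in ξ..η, 1 / θ σ) -
        Real.exp (-(η - ξ) / (ε * θ η))| ≤
      L * (η - ξ) ^ 2 / (2 * ε) * Real.exp (-(η - ξ) / (Mθ * ε)) := by
  set I := ∫ σ in ξ..η, 1 / θ σ
  have hdiff : Differentiable ℝ fun y => 1 / θ y := fun x =>
    (differentiableAt_const 1).div (hθC1.differentiable one_ne_zero x) (hθpos x).ne'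
  have hint : IntervalIntegrable (fun σ => 1 / θ σ) volume ξ η :=
    hdiff.continuous.intervalIntegrable _ _
  have hlower : (η - ξ) / Mθ ≤ I := by
    simpa [I, div_eq_mul_inv] using integral_mono_on hξη intervalIntegrable_const hint
      fun σ _ => one_div_le_one_div_of_le (hθpos σ) (hMθ σ)
  have hdev : |I - (η - ξ) * (1 / θ η)| ≤ L * (η - ξ) ^ 2 / 2 :=
    abs_integral_sub_mul_right_le hξη hint fun σ hσ => by
      simpa [abs_sub_comm σ, abs_of_nonneg (sub_nonneg.2 hσ.2)] using
        convex_univ.norm_image_sub_le_of_norm_deriv_le (fun x _ => hdiff x) (fun x _ => hL x)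
          (mem_univ η) (mem_univ σ)
  have hfrozen : (η - ξ) / Mθ ≤ (η - ξ) / θ η :=
    div_le_div_of_nonneg_left (sub_nonneg.2 hξη) (hθpos η) (hMθ η)
  calc |exp (-(1 / ε) * I) - exp (-(η - ξ) / (ε * θ η))|
      = |exp (-(I / ε)) - exp (-((η - ξ) / θ η / ε))| := by ring_nf
    _ ≤ |I / ε - (η - ξ) / θ η / ε| * exp (-((η - ξ) / Mθ / ε)) :=
        abs_exp_neg_sub_exp_neg_le (div_le_div_of_nonneg_right hlower hε.le)
          (div_le_div_of_nonneg_right hfrozen hε.le)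
    _ = |I - (η - ξ) * (1 / θ η)| / ε * exp (-(η - ξ) / (Mθ * ε)) := by
        rw [← sub_div, abs_div, abs_of_pos hε]; ring_nf
    _ ≤ L * (η - ξ) ^ 2 / (2 * ε) * exp (-(η - ξ) / (Mθ * ε)) := by
        refine mul_le_mul_of_nonneg_right ?_ (exp_pos _).le
        rw [← div_div]
        exact div_le_div_of_nonneg_right hdev hε.le

/-- **Frozen-coefficient approximation of the relaxation kernel.**
If `θ : ℝ → (0,∞)` is `C¹`, `θ ≤ M_θ`, and `|(1/θ)'| ≤ L`, then for `ε > 0`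
and `0 ≤ ξ ≤ η`,
`|exp(-(1/ε)∫_ξ^η dσ/θ(σ)) - exp(-(η-ξ)/(ε θ(η)))|
  ≤ (L (η-ξ)²/(2ε)) exp(-(η-ξ)/(M_θ ε))`. -/
theorem frozen_relaxation_kernel_estimate
    (θ : ℝ → ℝ) (hθC1 : ContDiff ℝ 1 θ) (hθpos : ∀ x, 0 < θ x)
    (Mθ : ℝ) (hMθ : ∀ x, θ x ≤ Mθ)
    (L : ℝ) (hL : ∀ x, |deriv (fun y => 1 / θ y) x| ≤ L)
    (ε : ℝ) (hε : 0 < ε) (ξ η : ℝ) (hξ : 0 ≤ ξ) (hξη : ξ ≤ η) :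
    |Real.exp (-(1 / ε) * ∫ σ in ξ..η, 1 / θ σ) -
        Real.exp (-(η - ξ) / (ε * θ η))| ≤
      L * (η - ξ) ^ 2 / (2 * ε) * Real.exp (-(η - ξ) / (Mθ * ε)) :=
  frozen_relaxation_kernel_estimate_general θ hθC1 hθpos Mθ hMθ L hL ε hε ξ η hξη
end

section
/- Let C, θ : ℝ → (0,∞) be continuously differentiable with C(x) ≥ m_C > 0 and 0 < θ(x) ≤ M_θ for all x, and with L = sup_x |(1/θ)′(x)| < ∞. For ε > 0, Ω > 0 and 0 ≤ a < b, define Z = (2i/((b−a)ε)) ∫_a^b e^{−iΩη} ∫₀^η (sin(Ωξ)/C(ξ)) · exp( −(1/ε)∫_ξ^η dσ/θ(σ) ) dξ dη and Z¹ = (2i/((b−a)ε)) ∫_a^b e^{−iΩη} ∫₀^η (sin(Ωξ)/C(ξ)) · exp( −(η−ξ)/(εθ(η)) ) dξ dη. Then |Z − Z¹| ≤ 2 ε M_θ³ L / m_C. -/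
/-!
The two kernels are `exp (-A)` and `exp (-B)` with `A = ε⁻¹ ∫_ξ^η 1/θ` and
`B = (η - ξ) / (ε θ(η))`. Both exponents are at least `(η - ξ) / (ε M_θ)`, and
`A - B = ε⁻¹ ∫_ξ^η (1/θ(σ) - 1/θ(η)) dσ` is at most `L (η - ξ)² / (2ε)` in absolute value
because `1/θ` is `L`-Lipschitz. Since `|e^{-A} - e^{-B}| ≤ |A - B| e^{-min(A, B)}`, the inner
integrands differ by at most `L (η - ξ)² e^{-(η - ξ)/(ε M_θ)} / (2 ε m_C)`, and
`∫_0^∞ t² e^{-t/k} dt = 2k³` bounds the inner integrals' difference by `L ε² M_θ³ / m_C`,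
uniformly in `η ≥ 0`. The factor `e^{-iΩη}` is unimodular, so the average over `[a, b]`
with prefactor `2 / ((b - a) ε)` gives the claim.
-/

open Real Complex MeasureTheory intervalIntegral

lemma abs_exp_neg_sub_exp_neg_le_s13 {A B m : ℝ} (hA : m ≤ A) (hB : m ≤ B) :
    |Real.exp (-A) - Real.exp (-B)| ≤ |A - B| * Real.exp (-m) := by
  wlog hAB : A ≤ B generalizing A B
  · rw [abs_sub_comm, abs_sub_comm A]
    exact this hB hA (le_of_not_ge hAB)
  have hexp : Real.exp (-A) - Real.exp (-B) = Real.exp (-A) * (1 - Real.exp (A - B)) := by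
    rw [mul_sub, mul_one, ← Real.exp_add]; ring_nf
  have h1 : 1 - Real.exp (A - B) ≤ B - A := by linarith [Real.add_one_le_exp (A - B)]
  have h2 : 0 ≤ 1 - Real.exp (A - B) := by
    linarith [Real.exp_le_one_iff.2 (by linarith : A - B ≤ 0)]
  rw [abs_of_nonneg (by rw [hexp]; positivity), abs_of_nonpos (by linarith), hexp]
  calc Real.exp (-A) * (1 - Real.exp (A - B)) ≤ Real.exp (-m) * (B - A) :=
        mul_le_mul (Real.exp_le_exp.2 (by linarith)) h1 h2 (Real.exp_nonneg _)
    _ = -(A - B) * Real.exp (-m) := by ring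

lemma integral_sq_mul_exp_neg_div_le {k η : ℝ} (hk : 0 < k) (hη : 0 ≤ η) :
    ∫ t in (0 : ℝ)..η, t ^ 2 * Real.exp (-t / k) ≤ 2 * k ^ 3 := by
  let F : ℝ → ℝ := fun t => (-k * t ^ 2 - 2 * k ^ 2 * t - 2 * k ^ 3) * Real.exp (-t / k)
  have hF : ∀ t, HasDerivAt F (t ^ 2 * Real.exp (-t / k)) t := by
    intro t
    have hp := (((hasDerivAt_pow 2 t).const_mul (-k)).sub
      ((hasDerivAt_id t).const_mul (2 * k ^ 2))).sub_const (2 * k ^ 3)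
    have he := ((hasDerivAt_id t).neg.div_const k).exp
    refine (hp.mul he).congr_deriv ?_
    simp only [id, Pi.sub_apply, Pi.neg_apply]
    field_simp
    ring
  have hint : Continuous fun t : ℝ => t ^ 2 * Real.exp (-t / k) := by fun_prop
  rw [integral_eq_sub_of_hasDerivAt (fun t _ => hF t) (hint.intervalIntegrable _ _)]
  have hFη : F η ≤ 0 := by
    have : 0 ≤ k * η ^ 2 + 2 * k ^ 2 * η + 2 * k ^ 3 := by positivity
    exact mul_nonpos_of_nonpos_of_nonneg (by linarith) (Real.exp_nonneg _)
  have hF0 : F 0 = -(2 * k ^ 3) := by simp [F]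
  linarith

lemma abs_sub_le_of_abs_deriv_le {f : ℝ → ℝ} {L : ℝ} (hf : Differentiable ℝ f)
    (hL : ∀ x, |deriv f x| ≤ L) (x y : ℝ) : |f x - f y| ≤ L * |x - y| := by
  simpa only [Real.norm_eq_abs] using
    convex_univ.norm_image_sub_le_of_norm_deriv_le (fun z _ => hf z) (fun z _ => hL z)
      (Set.mem_univ y) (Set.mem_univ x)

lemma abs_integral_sub_mul_endpoint_le {g : ℝ → ℝ} {L ξ η : ℝ}
    (hg : IntervalIntegrable g volume ξ η) (hgL : ∀ x y, |g x - g y| ≤ L * |x - y|)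
    (hξη : ξ ≤ η) :
    |(∫ σ in ξ..η, g σ) - (η - ξ) * g η| ≤ L * (η - ξ) ^ 2 / 2 := by
  have hsub : (∫ σ in ξ..η, g σ) - (η - ξ) * g η = ∫ σ in ξ..η, (g σ - g η) := by
    simp [integral_sub hg intervalIntegrable_const]
  have hlin : ∫ σ in ξ..η, L * (η - σ) = L * (η - ξ) ^ 2 / 2 := by
    rw [intervalIntegral.integral_const_mul, integral_comp_sub_left (fun σ => σ), integral_id]
    ring
  rw [hsub, ← hlin, ← Real.norm_eq_abs]
  refine norm_integral_le_of_norm_le hξη (Filter.Eventually.of_forall fun σ hσ => ?_)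
    ((continuous_const.mul (continuous_const.sub continuous_id)).intervalIntegrable _ _)
  simpa [abs_of_nonpos (by linarith [hσ.2] : σ - η ≤ 0)] using hgL σ η

lemma abs_exp_relaxation_sub_frozen_le {θ : ℝ → ℝ} {Mθ L ε ξ η : ℝ} (hθ : Continuous θ)
    (hθpos : ∀ x, 0 < θ x) (hMθ : ∀ x, θ x ≤ Mθ)
    (hL : ∀ x y, |1 / θ x - 1 / θ y| ≤ L * |x - y|) (hε : 0 < ε) (hξη : ξ ≤ η) :
    |Real.exp (-(1 / ε) * ∫ σ in ξ..η, 1 / θ σ) - Real.exp (-(η - ξ) / (ε * θ η))| ≤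
      L * (η - ξ) ^ 2 / (2 * ε) * Real.exp (-(η - ξ) / (ε * Mθ)) := by
  have hMθpos : 0 < Mθ := (hθpos η).trans_le (hMθ η)
  have hint : IntervalIntegrable (fun σ => 1 / θ σ) volume ξ η :=
    (continuous_const.div hθ fun x => (hθpos x).ne').intervalIntegrable _ _
  set A := (1 / ε) * ∫ σ in ξ..η, 1 / θ σ
  set B := (η - ξ) / (ε * θ η)
  have hA : (η - ξ) / (ε * Mθ) ≤ A := by
    have : (η - ξ) * (1 / Mθ) ≤ ∫ σ in ξ..η, 1 / θ σ := by
      simpa using integral_mono_on hξη intervalIntegrable_const hint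
        fun σ _ => one_div_le_one_div_of_le (hθpos σ) (hMθ σ)
    calc (η - ξ) / (ε * Mθ) = 1 / ε * ((η - ξ) * (1 / Mθ)) := by field_simp
      _ ≤ A := mul_le_mul_of_nonneg_left this (by positivity)
  have hB : (η - ξ) / (ε * Mθ) ≤ B :=
    div_le_div_of_nonneg_left (by linarith) (by have := hθpos η; positivity)
      (by gcongr; exact hMθ η)
  have hAB : |A - B| ≤ L * (η - ξ) ^ 2 / (2 * ε) := by
    have : A - B = 1 / ε * ((∫ σ in ξ..η, 1 / θ σ) - (η - ξ) * (1 / θ η)) := by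
      simp only [A, B]; field_simp
    rw [this, abs_mul, abs_of_pos (by positivity)]
    calc 1 / ε * |(∫ σ in ξ..η, 1 / θ σ) - (η - ξ) * (1 / θ η)|
        ≤ 1 / ε * (L * (η - ξ) ^ 2 / 2) :=
          mul_le_mul_of_nonneg_left (abs_integral_sub_mul_endpoint_le hint hL hξη) (by positivity)
      _ = L * (η - ξ) ^ 2 / (2 * ε) := by ring
  rw [neg_mul, neg_div, neg_div]
  exact (abs_exp_neg_sub_exp_neg_le_s13 hA hB).trans (by gcongr)

lemma abs_integral_sub_integral_le_of_sq_mul_exp_bound {u v : ℝ → ℝ} {K k η : ℝ} (hK : 0 ≤ K)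
    (hk : 0 < k) (hη : 0 ≤ η) (hu : IntervalIntegrable u volume 0 η)
    (hv : IntervalIntegrable v volume 0 η)
    (huv : ∀ ξ ∈ Set.Icc 0 η, |u ξ - v ξ| ≤ K * ((η - ξ) ^ 2 * Real.exp (-(η - ξ) / k))) :
    |(∫ ξ in (0 : ℝ)..η, u ξ) - ∫ ξ in (0 : ℝ)..η, v ξ| ≤ 2 * K * k ^ 3 := by
  have hbound : Continuous fun ξ => K * ((η - ξ) ^ 2 * Real.exp (-(η - ξ) / k)) := by fun_prop
  calc |(∫ ξ in (0 : ℝ)..η, u ξ) - ∫ ξ in (0 : ℝ)..η, v ξ|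
      ≤ ∫ ξ in (0 : ℝ)..η, K * ((η - ξ) ^ 2 * Real.exp (-(η - ξ) / k)) := by
        rw [← integral_sub hu hv, ← Real.norm_eq_abs]
        exact norm_integral_le_of_norm_le hη
          (Filter.Eventually.of_forall fun ξ hξ => huv ξ (Set.Ioc_subset_Icc_self hξ))
          (hbound.intervalIntegrable _ _)
    _ = K * ∫ t in (0 : ℝ)..η, t ^ 2 * Real.exp (-t / k) := by
        rw [intervalIntegral.integral_const_mul,
          integral_comp_sub_left (fun t => t ^ 2 * Real.exp (-t / k))]
        simp
    _ ≤ K * (2 * k ^ 3) := by gcongr; exact integral_sq_mul_exp_neg_div_le hk hη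
    _ = 2 * K * k ^ 3 := by ring

lemma continuous_intervalIntegral_bounds {g : ℝ → ℝ} (hg : Continuous g) :
    Continuous fun p : ℝ × ℝ => ∫ σ in p.1..p.2, g σ := by
  have hint : ∀ a b, IntervalIntegrable g volume a b := hg.intervalIntegrable
  have hprim := continuous_primitive hint 0
  have hsplit : (fun p : ℝ × ℝ => ∫ σ in p.1..p.2, g σ) =
      fun p => (∫ σ in (0 : ℝ)..p.2, g σ) - ∫ σ in (0 : ℝ)..p.1, g σ :=
    funext fun p => (integral_interval_sub_left (hint 0 _) (hint 0 _)).symm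
  rw [hsplit]
  exact (hprim.comp continuous_snd).sub (hprim.comp continuous_fst)

noncomputable def measuredImpedance (ε Ω a b : ℝ) (u : ℝ → ℝ) : ℂ :=
  2 * Complex.I / (((b : ℂ) - a) * ε) *
    ∫ η in a..b, Complex.exp (-Complex.I * Ω * η) * (u η : ℂ)

lemma measuredImpedance_sub {ε Ω a b : ℝ} {u v : ℝ → ℝ} (hu : Continuous u)
    (hv : Continuous v) :
    measuredImpedance ε Ω a b u - measuredImpedance ε Ω a b v =
      measuredImpedance ε Ω a b (u - v) := by
  have hint : ∀ w : ℝ → ℝ, Continuous w →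
      IntervalIntegrable (fun η : ℝ => Complex.exp (-Complex.I * Ω * η) * (w η : ℂ)) volume a b :=
    fun w hw => (by fun_prop : Continuous _).intervalIntegrable _ _
  unfold measuredImpedance
  rw [← mul_sub, ← integral_sub (hint u hu) (hint v hv)]
  simp only [Pi.sub_apply, Complex.ofReal_sub, mul_sub]

lemma norm_measuredImpedance_le {ε Ω a b M : ℝ} {u : ℝ → ℝ} (hab : a < b) (hε : 0 < ε)
    (hu : ∀ η ∈ Set.Ioc a b, |u η| ≤ M) :
    ‖measuredImpedance ε Ω a b u‖ ≤ 2 / ε * M := by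
  have hba : 0 < b - a := sub_pos.2 hab
  have hfactor : ‖2 * Complex.I / (((b : ℂ) - a) * ε)‖ = 2 / ((b - a) * ε) := by
    rw [← Complex.ofReal_sub, norm_div, norm_mul, norm_mul, Complex.norm_I, Complex.norm_real,
      Complex.norm_real, Complex.norm_two, Real.norm_of_nonneg hba.le, Real.norm_of_nonneg hε.le,
      mul_one]
  have hintegral : ‖∫ η in a..b, Complex.exp (-Complex.I * Ω * η) * (u η : ℂ)‖ ≤ M * |b - a| := by
    refine norm_integral_le_of_norm_le_const fun η hη => ?_
    rw [Set.uIoc_of_le hab.le] at hη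
    simpa [Complex.norm_exp] using hu η hη
  rw [measuredImpedance, norm_mul, hfactor]
  calc _ ≤ 2 / ((b - a) * ε) * (M * |b - a|) := by gcongr
    _ = 2 / ε * M := by rw [abs_of_pos hba]; field_simp

noncomputable def relaxationIntegrand (C θ : ℝ → ℝ) (ε Ω η ξ : ℝ) : ℝ :=
  Real.sin (Ω * ξ) / C ξ * Real.exp (-(1 / ε) * ∫ σ in ξ..η, 1 / θ σ)

noncomputable def frozenRelaxationIntegrand (C θ : ℝ → ℝ) (ε Ω η ξ : ℝ) : ℝ :=
  Real.sin (Ω * ξ) / C ξ * Real.exp (-(η - ξ) / (ε * θ η))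

section Integrand

variable {C θ : ℝ → ℝ} {ε Ω : ℝ}

lemma continuous_relaxationIntegrand (hC : Continuous C) (hC0 : ∀ x, C x ≠ 0)
    (hθ : Continuous θ) (hθ0 : ∀ x, θ x ≠ 0) :
    Continuous (Function.uncurry (relaxationIntegrand C θ ε Ω)) := by
  have hexponent := continuous_intervalIntegral_bounds
    ((continuous_const : Continuous fun _ : ℝ => (1 : ℝ)).div hθ hθ0)
  exact ((by fun_prop : Continuous fun p : ℝ × ℝ => Real.sin (Ω * p.2)).div
    (hC.comp continuous_snd) fun p => hC0 p.2).mul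
    (Real.continuous_exp.comp (continuous_const.mul (hexponent.comp continuous_swap)))

lemma continuous_frozenRelaxationIntegrand (hC : Continuous C) (hC0 : ∀ x, C x ≠ 0)
    (hθ : Continuous θ) (hθ0 : ∀ x, θ x ≠ 0) (hε : ε ≠ 0) :
    Continuous (Function.uncurry (frozenRelaxationIntegrand C θ ε Ω)) :=
  ((by fun_prop : Continuous fun p : ℝ × ℝ => Real.sin (Ω * p.2)).div
    (hC.comp continuous_snd) fun p => hC0 p.2).mul
    (Real.continuous_exp.comp ((by fun_prop : Continuous fun p : ℝ × ℝ => -(p.1 - p.2)).div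
      (continuous_const.mul (hθ.comp continuous_fst)) fun p => mul_ne_zero hε (hθ0 p.1)))

lemma abs_integral_relaxationIntegrand_sub_frozen_le {mC Mθ L η : ℝ} (hC : Continuous C)
    (hmC : 0 < mC) (hmC' : ∀ x, mC ≤ C x) (hθ : Continuous θ) (hθpos : ∀ x, 0 < θ x)
    (hMθ : ∀ x, θ x ≤ Mθ) (hL : ∀ x y, |1 / θ x - 1 / θ y| ≤ L * |x - y|) (hε : 0 < ε)
    (hη : 0 ≤ η) :
    |(∫ ξ in (0 : ℝ)..η, relaxationIntegrand C θ ε Ω η ξ) -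
        ∫ ξ in (0 : ℝ)..η, frozenRelaxationIntegrand C θ ε Ω η ξ| ≤
      L * ε ^ 2 * Mθ ^ 3 / mC := by
  have hC0 : ∀ x, C x ≠ 0 := fun x => (hmC.trans_le (hmC' x)).ne'
  have hθ0 : ∀ x, θ x ≠ 0 := fun x => (hθpos x).ne'
  have hMθpos : 0 < Mθ := (hθpos 0).trans_le (hMθ 0)
  have hL0 : 0 ≤ L := by simpa using (abs_nonneg _).trans (hL 1 0)
  have hsource : ∀ ξ, |Real.sin (Ω * ξ) / C ξ| ≤ 1 / mC := fun ξ => by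
    rw [abs_div, abs_of_pos (hmC.trans_le (hmC' ξ))]
    exact div_le_div₀ zero_le_one (abs_sin_le_one _) hmC (hmC' ξ)
  have hbound := abs_integral_sub_integral_le_of_sq_mul_exp_bound (K := L / (2 * ε * mC))
    (k := ε * Mθ) (by positivity) (by positivity) hη
    (((continuous_relaxationIntegrand hC hC0 hθ hθ0).uncurry_left η).intervalIntegrable _ _)
    (((continuous_frozenRelaxationIntegrand hC hC0 hθ hθ0 hε.ne').uncurry_left η).intervalIntegrable
      _ _)
    fun ξ hξ => by
      rw [relaxationIntegrand, frozenRelaxationIntegrand, ← mul_sub, abs_mul]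
      calc _ ≤ 1 / mC * (L * (η - ξ) ^ 2 / (2 * ε) * Real.exp (-(η - ξ) / (ε * Mθ))) :=
            mul_le_mul (hsource ξ) (abs_exp_relaxation_sub_frozen_le hθ hθpos hMθ hL hε hξ.2)
              (abs_nonneg _) (by positivity)
        _ = _ := by field_simp
  calc _ ≤ 2 * (L / (2 * ε * mC)) * (ε * Mθ) ^ 3 := hbound
    _ = L * ε ^ 2 * Mθ ^ 3 / mC := by field_simp

end Integrand

theorem slow_drift_first_approximation_general
    (C θ : ℝ → ℝ) (hCC1 : ContDiff ℝ 1 C) (hθC1 : ContDiff ℝ 1 θ)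
    (hθpos : ∀ x, 0 < θ x)
    (mC : ℝ) (hmC : 0 < mC) (hmC' : ∀ x, mC ≤ C x)
    (Mθ : ℝ) (hMθ : ∀ x, θ x ≤ Mθ)
    (L : ℝ) (hL : ∀ x, |deriv (fun y => 1 / θ y) x| ≤ L)
    (ε Ω : ℝ) (hε : 0 < ε)
    (a b : ℝ) (ha : 0 ≤ a) (hab : a < b)
    (Z Z₁ : ℂ)
    (hZ : Z = 2 * Complex.I / (((b : ℂ) - a) * ε) *
      ∫ η in a..b, Complex.exp (-Complex.I * Ω * η) *
        ((∫ ξ in (0 : ℝ)..η, Real.sin (Ω * ξ) / C ξ *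
          Real.exp (-(1 / ε) * ∫ σ in ξ..η, 1 / θ σ) : ℝ) : ℂ))
    (hZ₁ : Z₁ = 2 * Complex.I / (((b : ℂ) - a) * ε) *
      ∫ η in a..b, Complex.exp (-Complex.I * Ω * η) *
        ((∫ ξ in (0 : ℝ)..η, Real.sin (Ω * ξ) / C ξ *
          Real.exp (-(η - ξ) / (ε * θ η)) : ℝ) : ℂ)) :
    ‖Z - Z₁‖ ≤ 2 * ε * Mθ ^ 3 * L / mC := by
  have hC := hCC1.continuous
  have hθ := hθC1.continuous
  have hC0 : ∀ x, C x ≠ 0 := fun x => (hmC.trans_le (hmC' x)).ne'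
  have hθ0 : ∀ x, θ x ≠ 0 := fun x => (hθpos x).ne'
  have hLip : ∀ x y, |1 / θ x - 1 / θ y| ≤ L * |x - y| :=
    abs_sub_le_of_abs_deriv_le
      ((differentiable_const 1).div (hθC1.differentiable one_ne_zero) hθ0) hL
  have hZ' : Z = measuredImpedance ε Ω a b
      fun η => ∫ ξ in (0 : ℝ)..η, relaxationIntegrand C θ ε Ω η ξ := hZ
  have hZ₁' : Z₁ = measuredImpedance ε Ω a b
      fun η => ∫ ξ in (0 : ℝ)..η, frozenRelaxationIntegrand C θ ε Ω η ξ := hZ₁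
  have hresponse : ∀ f : ℝ → ℝ → ℝ, Continuous (Function.uncurry f) →
      Continuous fun η => ∫ ξ in (0 : ℝ)..η, f η ξ :=
    fun f hf => continuous_parametric_intervalIntegral_of_continuous hf continuous_id
  rw [hZ', hZ₁', measuredImpedance_sub
    (hresponse _ (continuous_relaxationIntegrand hC hC0 hθ hθ0))
    (hresponse _ (continuous_frozenRelaxationIntegrand hC hC0 hθ hθ0 hε.ne'))]
  calc _ ≤ 2 / ε * (L * ε ^ 2 * Mθ ^ 3 / mC) :=
        norm_measuredImpedance_le hab hε fun η hη =>
          abs_integral_relaxationIntegrand_sub_frozen_le hC hmC hmC' hθ hθpos hMθ hLip hε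
            (ha.trans hη.1.le)
    _ = 2 * ε * Mθ ^ 3 * L / mC := by field_simp

/-- **First approximation step in the slow-drift asymptotics:** replacing the exact
relaxation kernel by its frozen-coefficient approximation changes the rescaled
measured impedance by at most `2 ε M_θ³ L / m_C`. -/
theorem slow_drift_first_approximation
    (C θ : ℝ → ℝ) (hCC1 : ContDiff ℝ 1 C) (hθC1 : ContDiff ℝ 1 θ)
    (hCpos : ∀ x, 0 < C x) (hθpos : ∀ x, 0 < θ x)
    (mC : ℝ) (hmC : 0 < mC) (hmC' : ∀ x, mC ≤ C x)
    (Mθ : ℝ) (hMθ : ∀ x, θ x ≤ Mθ)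
    (L : ℝ) (hL : ∀ x, |deriv (fun y => 1 / θ y) x| ≤ L)
    (ε Ω : ℝ) (hε : 0 < ε) (hΩ : 0 < Ω)
    (a b : ℝ) (ha : 0 ≤ a) (hab : a < b)
    (Z Z₁ : ℂ)
    (hZ : Z = 2 * Complex.I / (((b : ℂ) - a) * ε) *
      ∫ η in a..b, Complex.exp (-Complex.I * Ω * η) *
        ((∫ ξ in (0 : ℝ)..η, Real.sin (Ω * ξ) / C ξ *
          Real.exp (-(1 / ε) * ∫ σ in ξ..η, 1 / θ σ) : ℝ) : ℂ))
    (hZ₁ : Z₁ = 2 * Complex.I / (((b : ℂ) - a) * ε) *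
      ∫ η in a..b, Complex.exp (-Complex.I * Ω * η) *
        ((∫ ξ in (0 : ℝ)..η, Real.sin (Ω * ξ) / C ξ *
          Real.exp (-(η - ξ) / (ε * θ η)) : ℝ) : ℂ)) :
    ‖Z - Z₁‖ ≤ 2 * ε * Mθ ^ 3 * L / mC :=
  slow_drift_first_approximation_general C θ hCC1 hθC1 hθpos mC hmC hmC' Mθ hMθ L hL ε Ω hε a b ha
    hab Z Z₁ hZ hZ₁
end

section
/- Let C, θ : ℝ → (0,∞) be continuously differentiable with 0 < θ(x) ≤ M_θ for all x and with L_{C⁻¹} = sup_x |(1/C)′(x)| < ∞. For ε > 0, Ω > 0 and 0 ≤ a < b, define Z¹ = (2i/((b−a)ε)) ∫_a^b e^{−iΩη} ∫₀^η (sin(Ωξ)/C(ξ)) · exp( −(η−ξ)/(εθ(η)) ) dξ dη and Z² = (2i/((b−a)ε)) ∫_a^b (e^{−iΩη}/C(η)) ∫₀^η sin(Ωξ) · exp( −(η−ξ)/(εθ(η)) ) dξ dη. Then |Z¹ − Z²| ≤ 2 L_{C⁻¹} M_θ² ε. -/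
/-!
`Z₁ - Z₂` is `2i/((b-a)ε)` times the integral over `η ∈ [a, b]` of
`e^{-iΩη} ∫₀^η sin(Ωξ) (1/C(ξ) - 1/C(η)) e^{-(η-ξ)/τ} dξ` with `τ = εθ(η)`.
The mean value bound `|1/C(ξ) - 1/C(η)| ≤ L_{C⁻¹} (η - ξ)` and
`∫₀^η (η - ξ) e^{-(η-ξ)/τ} dξ ≤ τ² ≤ ε² M_θ²` bound the integrand by `L_{C⁻¹} M_θ² ε²`,
and averaging over `[a, b]` against the prefactor leaves `2 L_{C⁻¹} M_θ² ε`.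
-/

open Real Complex MeasureTheory intervalIntegral

theorem integral_sub_mul_exp_neg_div {τ : ℝ} (hτ : τ ≠ 0) (η : ℝ) :
    ∫ ξ in (0 : ℝ)..η, (η - ξ) * Real.exp (-(η - ξ) / τ) =
      τ ^ 2 - τ * (η + τ) * Real.exp (-η / τ) := by
  have hderiv : ∀ ξ ∈ Set.uIcc (0 : ℝ) η,
      HasDerivAt (fun ξ => τ * (η - ξ + τ) * Real.exp (-(η - ξ) / τ))
        ((η - ξ) * Real.exp (-(η - ξ) / τ)) ξ := by
    intro ξ _
    have hexp : HasDerivAt (fun ξ => -(η - ξ) / τ) (1 / τ) ξ := by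
      simpa using (((hasDerivAt_id ξ).const_sub η).neg).div_const τ
    have hpoly : HasDerivAt (fun ξ => τ * (η - ξ + τ)) (-τ) ξ := by
      simpa using (((hasDerivAt_id ξ).const_sub η).add_const τ).const_mul τ
    refine (hpoly.mul hexp.exp).congr_deriv ?_
    field_simp
    ring
  rw [integral_eq_sub_of_hasDerivAt hderiv (Continuous.intervalIntegrable (by fun_prop) _ _)]
  simp only [sub_self, neg_zero, zero_div, Real.exp_zero, sub_zero]
  ring

theorem integral_sub_mul_exp_neg_div_le_sq {τ η : ℝ} (hτ : 0 < τ) (hη : 0 ≤ η) :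
    ∫ ξ in (0 : ℝ)..η, (η - ξ) * Real.exp (-(η - ξ) / τ) ≤ τ ^ 2 := by
  rw [integral_sub_mul_exp_neg_div hτ.ne']
  have : 0 ≤ τ * (η + τ) * Real.exp (-η / τ) := by positivity
  linarith

theorem abs_intervalIntegral_mul_exp_sub_le {s g : ℝ → ℝ} {L τ η : ℝ} (hs : Continuous s)
    (hs_le : ∀ ξ, |s ξ| ≤ 1) (hg : Differentiable ℝ g) (hg' : ∀ x, |deriv g x| ≤ L)
    (hτ : 0 < τ) (hη : 0 ≤ η) :
    |(∫ ξ in (0 : ℝ)..η, s ξ * g ξ * Real.exp (-(η - ξ) / τ)) -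
        g η * ∫ ξ in (0 : ℝ)..η, s ξ * Real.exp (-(η - ξ) / τ)| ≤ L * τ ^ 2 := by
  have hL : 0 ≤ L := (abs_nonneg _).trans (hg' 0)
  have hlip : ∀ ξ ≤ η, |g ξ - g η| ≤ L * (η - ξ) := by
    intro ξ hξ
    have := convex_univ.norm_image_sub_le_of_norm_deriv_le (fun x _ => hg x) (fun x _ => hg' x)
      (Set.mem_univ η) (Set.mem_univ ξ)
    rwa [Real.norm_eq_abs, Real.norm_eq_abs, abs_sub_comm ξ η,
      abs_of_nonneg (sub_nonneg.2 hξ)] at this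
  have hgc := hg.continuous
  have hcomb : (∫ ξ in (0 : ℝ)..η, s ξ * g ξ * Real.exp (-(η - ξ) / τ)) -
        g η * ∫ ξ in (0 : ℝ)..η, s ξ * Real.exp (-(η - ξ) / τ) =
      ∫ ξ in (0 : ℝ)..η, s ξ * (g ξ - g η) * Real.exp (-(η - ξ) / τ) := by
    rw [← intervalIntegral.integral_const_mul, ← intervalIntegral.integral_sub
      (Continuous.intervalIntegrable (by fun_prop) _ _)
      (Continuous.intervalIntegrable (by fun_prop) _ _)]
    congr 1
    ext ξ
    ring
  have hpointwise : ∀ ξ ∈ Set.Ioc 0 η, ‖s ξ * (g ξ - g η) * Real.exp (-(η - ξ) / τ)‖ ≤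
      L * ((η - ξ) * Real.exp (-(η - ξ) / τ)) := by
    intro ξ hξ
    rw [Real.norm_eq_abs, abs_mul, abs_mul, Real.abs_exp, ← mul_assoc]
    refine mul_le_mul_of_nonneg_right ?_ (Real.exp_pos _).le
    simpa using mul_le_mul (hs_le ξ) (hlip ξ hξ.2) (abs_nonneg _) zero_le_one
  rw [hcomb]
  calc |∫ ξ in (0 : ℝ)..η, s ξ * (g ξ - g η) * Real.exp (-(η - ξ) / τ)|
      ≤ ∫ ξ in (0 : ℝ)..η, L * ((η - ξ) * Real.exp (-(η - ξ) / τ)) :=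
        norm_integral_le_of_norm_le hη (ae_of_all _ hpointwise)
          (Continuous.intervalIntegrable (by fun_prop) _ _)
    _ = L * ∫ ξ in (0 : ℝ)..η, (η - ξ) * Real.exp (-(η - ξ) / τ) :=
        intervalIntegral.integral_const_mul _ _
    _ ≤ L * τ ^ 2 := by gcongr; exact integral_sub_mul_exp_neg_div_le_sq hτ hη

theorem continuous_intervalIntegral_mul_exp {h τ : ℝ → ℝ} (hh : Continuous h)
    (hτ : Continuous τ) (hτ0 : ∀ x, τ x ≠ 0) :
    Continuous fun η => ∫ ξ in (0 : ℝ)..η, h ξ * Real.exp (-(η - ξ) / τ η) :=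
  continuous_parametric_intervalIntegral_of_continuous
    (f := fun η ξ => h ξ * Real.exp (-(η - ξ) / τ η))
    (by fun_prop (disch := exact fun p => hτ0 p.1)) continuous_id

theorem norm_div_mul_intervalIntegral_le {f : ℝ → ℂ} {a b B : ℝ} (hab : a ≠ b) (c : ℂ)
    (hf : ∀ x ∈ Set.uIoc a b, ‖f x‖ ≤ B) :
    ‖c / ((b : ℂ) - a) * ∫ x in a..b, f x‖ ≤ ‖c‖ * B := by
  have hba : 0 < |b - a| := abs_pos.2 (sub_ne_zero.2 hab.symm)
  rw [norm_mul, norm_div, ← Complex.ofReal_sub, Complex.norm_real, Real.norm_eq_abs]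
  calc ‖c‖ / |b - a| * ‖∫ x in a..b, f x‖ ≤ ‖c‖ / |b - a| * (B * |b - a|) := by
        gcongr
        exact norm_integral_le_of_norm_le_const hf
    _ = ‖c‖ * B := by field_simp

theorem norm_exp_mul_sub_exp_div_mul {z : ℂ} (hz : z.re = 0) (u v c : ℝ) :
    ‖Complex.exp z * u - Complex.exp z / c * v‖ = |u - 1 / c * v| := by
  rw [div_eq_mul_one_div (Complex.exp z), mul_assoc, ← mul_sub, norm_mul, Complex.norm_exp, hz,
    Real.exp_zero, one_mul]
  norm_cast

theorem slow_drift_second_approximation_general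
    (C θ : ℝ → ℝ) (hCC1 : ContDiff ℝ 1 C) (hθC1 : ContDiff ℝ 1 θ)
    (hCpos : ∀ x, 0 < C x) (hθpos : ∀ x, 0 < θ x)
    (Mθ : ℝ) (hMθ : ∀ x, θ x ≤ Mθ)
    (LCinv : ℝ) (hLCinv : ∀ x, |deriv (fun y => 1 / C y) x| ≤ LCinv)
    (ε Ω : ℝ) (hε : 0 < ε)
    (a b : ℝ) (ha : 0 ≤ a) (hab : a < b)
    (Z₁ Z₂ : ℂ)
    (hZ₁ : Z₁ = 2 * Complex.I / (((b : ℂ) - a) * ε) *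
      ∫ η in a..b, Complex.exp (-Complex.I * Ω * η) *
        ((∫ ξ in (0 : ℝ)..η, Real.sin (Ω * ξ) / C ξ *
          Real.exp (-(η - ξ) / (ε * θ η)) : ℝ) : ℂ))
    (hZ₂ : Z₂ = 2 * Complex.I / (((b : ℂ) - a) * ε) *
      ∫ η in a..b, Complex.exp (-Complex.I * Ω * η) / (C η : ℂ) *
        ((∫ ξ in (0 : ℝ)..η, Real.sin (Ω * ξ) *
          Real.exp (-(η - ξ) / (ε * θ η)) : ℝ) : ℂ)) :
    ‖Z₁ - Z₂‖ ≤ 2 * LCinv * Mθ ^ 2 * ε := by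
  subst hZ₁ hZ₂
  have hL : 0 ≤ LCinv := (abs_nonneg _).trans (hLCinv 0)
  have hC0 : ∀ x, C x ≠ 0 := fun x => (hCpos x).ne'
  have hτ : ∀ x, 0 < ε * θ x := fun x => mul_pos hε (hθpos x)
  have hCc := hCC1.continuous
  have hθc := hθC1.continuous
  have hI₁ := continuous_intervalIntegral_mul_exp (h := fun ξ => Real.sin (Ω * ξ) / C ξ)
    (by fun_prop (disch := exact hC0 _)) (by fun_prop) fun x => (hτ x).ne'
  have hI₂ := continuous_intervalIntegral_mul_exp (h := fun ξ => Real.sin (Ω * ξ))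
    (by fun_prop) (by fun_prop) fun x => (hτ x).ne'
  have hE : Continuous fun η : ℝ => Complex.exp (-Complex.I * Ω * η) := by fun_prop
  rw [← mul_sub, ← intervalIntegral.integral_sub (Continuous.intervalIntegrable ?_ _ _)
    (Continuous.intervalIntegrable ?_ _ _), div_mul_eq_div_div_swap]
  · refine (norm_div_mul_intervalIntegral_le (B := LCinv * Mθ ^ 2 * ε ^ 2) hab.ne _
      fun η hη => ?_).trans_eq ?_
    · have hη0 : 0 ≤ η := ha.trans (Set.uIoc_of_le hab.le ▸ hη).1.le
      rw [norm_exp_mul_sub_exp_div_mul (by simp)]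
      calc _ ≤ LCinv * (ε * θ η) ^ 2 := by
            simpa only [mul_one_div] using abs_intervalIntegral_mul_exp_sub_le
              (s := fun ξ => Real.sin (Ω * ξ)) (g := fun y => 1 / C y) (by fun_prop)
              (fun ξ => Real.abs_sin_le_one _) (by fun_prop (disch := exact hC0 _)) hLCinv
              (hτ η) hη0
        _ ≤ LCinv * (ε * Mθ) ^ 2 := by gcongr; exacts [(hτ η).le, hMθ η]
        _ = LCinv * Mθ ^ 2 * ε ^ 2 := by ring
    · rw [norm_div, norm_mul, Complex.norm_I, Complex.norm_two, Complex.norm_real,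
        Real.norm_of_nonneg hε.le]
      field_simp
  · exact hE.mul (continuous_ofReal.comp hI₁)
  · exact (hE.div (continuous_ofReal.comp hCc) fun x => ofReal_ne_zero.2 (hC0 x)).mul
      (continuous_ofReal.comp hI₂)

/-- **Second approximation step in the slow-drift asymptotics:** replacing `C(ξ)` by
`C(η)` in the inner integral changes the rescaled measured impedance by at most
`2 L_{C⁻¹} M_θ² ε`. -/
theorem slow_drift_second_approximation
    (C θ : ℝ → ℝ) (hCC1 : ContDiff ℝ 1 C) (hθC1 : ContDiff ℝ 1 θ)
    (hCpos : ∀ x, 0 < C x) (hθpos : ∀ x, 0 < θ x)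
    (Mθ : ℝ) (hMθ : ∀ x, θ x ≤ Mθ)
    (LCinv : ℝ) (hLCinv : ∀ x, |deriv (fun y => 1 / C y) x| ≤ LCinv)
    (ε Ω : ℝ) (hε : 0 < ε) (hΩ : 0 < Ω)
    (a b : ℝ) (ha : 0 ≤ a) (hab : a < b)
    (Z₁ Z₂ : ℂ)
    (hZ₁ : Z₁ = 2 * Complex.I / (((b : ℂ) - a) * ε) *
      ∫ η in a..b, Complex.exp (-Complex.I * Ω * η) *
        ((∫ ξ in (0 : ℝ)..η, Real.sin (Ω * ξ) / C ξ *
          Real.exp (-(η - ξ) / (ε * θ η)) : ℝ) : ℂ))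
    (hZ₂ : Z₂ = 2 * Complex.I / (((b : ℂ) - a) * ε) *
      ∫ η in a..b, Complex.exp (-Complex.I * Ω * η) / (C η : ℂ) *
        ((∫ ξ in (0 : ℝ)..η, Real.sin (Ω * ξ) *
          Real.exp (-(η - ξ) / (ε * θ η)) : ℝ) : ℂ)) :
    ‖Z₁ - Z₂‖ ≤ 2 * LCinv * Mθ ^ 2 * ε :=
  slow_drift_second_approximation_general C θ hCC1 hθC1 hCpos hθpos Mθ hMθ LCinv hLCinv ε Ω hε a b
    ha hab Z₁ Z₂ hZ₁ hZ₂
end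

section
/- If f : [2π, 4π] → ℝ is continuous and strictly decreasing, then ∫_{2π}^{4π} f(s) sin(2s) ds > 0. -/
/-!
Over a period `[kπ, kπ + π]` of `sin (2 s)`, the substitution `s ↦ s + π/2` carries the negative
half onto the positive one, since `sin (2 (s + π/2)) = - sin (2 s)`. The integral over the period
therefore equals `∫_{kπ}^{kπ+π/2} (f s - f (s + π/2)) sin (2 s) ds`, whose integrand is positive
on the open interval when `f` is strictly decreasing. The interval `[2π, 4π]` consists of the two
periods `k = 2, 3`.
-/

open Real MeasureTheory intervalIntegral Set

theorem integral_mul_sin_two_mul_eq_integral_sub_mul (f : ℝ → ℝ) (a : ℝ)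
    (hf : IntervalIntegrable f volume a (a + π)) :
    ∫ s in a..a + π, f s * sin (2 * s) =
      ∫ s in a..a + π / 2, (f s - f (s + π / 2)) * sin (2 * s) := by
  have hπ := pi_pos
  have hfsin : IntervalIntegrable (fun s => f s * sin (2 * s)) volume a (a + π) :=
    hf.mul_continuousOn (by fun_prop)
  have h_mid : a + π / 2 ∈ uIcc a (a + π) := by
    rw [uIcc_of_le (by linarith)]
    constructor <;> linarith
  have h_first := hfsin.mono_set (uIcc_subset_uIcc_left h_mid)
  have h_second := hfsin.mono_set (uIcc_subset_uIcc_right h_mid)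
  have h_shift := h_second.comp_add_right (π / 2)
  rw [add_sub_cancel_right, show a + π - π / 2 = a + π / 2 by ring] at h_shift
  have h_fold : ∀ s, (f s - f (s + π / 2)) * sin (2 * s) =
      f s * sin (2 * s) + f (s + π / 2) * sin (2 * (s + π / 2)) := by
    intro s
    rw [mul_add, mul_div_cancel₀ π two_ne_zero, sin_add_pi]
    ring
  simp_rw [h_fold]
  rw [integral_add h_first h_shift, integral_comp_add_right (fun s => f s * sin (2 * s)),
    show a + π / 2 + π / 2 = a + π by ring, integral_add_adjacent_intervals h_first h_second]

theorem sin_two_mul_pos_of_mem_Ioo (k : ℤ) {s : ℝ} (hs : s ∈ Ioo (k * π) (k * π + π / 2)) :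
    0 < sin (2 * s) := by
  rw [← sin_sub_int_mul_two_pi (2 * s) k]
  exact sin_pos_of_pos_of_lt_pi (by linarith [hs.1]) (by linarith [hs.2])

theorem integral_mul_sin_two_mul_pos_of_strictAntiOn (f : ℝ → ℝ) (k : ℤ)
    (hf : StrictAntiOn f (Icc (k * π) (k * π + π))) :
    0 < ∫ s in k * π..k * π + π, f s * sin (2 * s) := by
  have hπ := pi_pos
  have hf_int : IntervalIntegrable f volume (k * π) (k * π + π) :=
    AntitoneOn.intervalIntegrable (by rw [uIcc_of_le (by linarith)]; exact hf.antitoneOn)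
  have h_shift_anti : ∀ c ∈ Icc 0 (π / 2),
      AntitoneOn (fun s => f (s + c)) (uIcc (k * π) (k * π + π / 2)) := by
    intro c hc
    rw [uIcc_of_le (by linarith)]
    exact fun x hx y hy hxy => hf.antitoneOn ⟨by linarith [hx.1, hc.1], by linarith [hx.2, hc.2]⟩
      ⟨by linarith [hy.1, hc.1], by linarith [hy.2, hc.2]⟩ (by linarith)
  have h_diff_int : IntervalIntegrable (fun s => f s - f (s + π / 2)) volume
      (k * π) (k * π + π / 2) := by
    simpa using (h_shift_anti 0 ⟨le_rfl, by linarith⟩).intervalIntegrable.sub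
      (h_shift_anti (π / 2) ⟨by linarith, le_rfl⟩).intervalIntegrable
  rw [integral_mul_sin_two_mul_eq_integral_sub_mul f _ hf_int]
  refine intervalIntegral_pos_of_pos_on (h_diff_int.mul_continuousOn (by fun_prop))
    (fun s hs => mul_pos ?_ (sin_two_mul_pos_of_mem_Ioo k hs)) (by linarith)
  have h_lt : f (s + π / 2) < f s :=
    hf ⟨hs.1.le, by linarith [hs.2]⟩ ⟨by linarith [hs.1], by linarith [hs.2]⟩ (by linarith)
  exact sub_pos.mpr h_lt

theorem inductive_loop_of_strictAnti_general
    (f : ℝ → ℝ)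
    (hanti : StrictAntiOn f (Set.Icc (2 * π) (4 * π))) :
    0 < ∫ s in (2 * π)..(4 * π), f s * Real.sin (2 * s) := by
  have hπ := pi_pos
  have h_int : ∀ a b, 2 * π ≤ a → b ≤ 4 * π → a ≤ b →
      IntervalIntegrable (fun s => f s * sin (2 * s)) volume a b := fun a b ha hb hab =>
    (AntitoneOn.intervalIntegrable (by
      rw [uIcc_of_le hab]; exact (hanti.mono (Icc_subset_Icc ha hb)).antitoneOn)).mul_continuousOn
      (by fun_prop)
  have h2 := integral_mul_sin_two_mul_pos_of_strictAntiOn f 2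
    (hanti.mono (Icc_subset_Icc (by push_cast; rfl) (by push_cast; linarith)))
  have h3 := integral_mul_sin_two_mul_pos_of_strictAntiOn f 3
    (hanti.mono (Icc_subset_Icc (by push_cast; linarith) (by push_cast; linarith)))
  rw [← integral_add_adjacent_intervals (b := 3 * π) (h_int _ _ le_rfl (by linarith) (by linarith))
    (h_int _ _ (by linarith) le_rfl (by linarith))]
  push_cast at h2 h3
  rw [show 2 * π + π = 3 * π by ring] at h2
  rw [show 3 * π + π = 4 * π by ring] at h3
  exact add_pos h2 h3

/-- **A strictly decreasing resistance drift profile produces an inductive loop:**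
if `f : [2π, 4π] → ℝ` is continuous and strictly decreasing, then
`∫_{2π}^{4π} f(s) sin(2s) ds > 0`. -/
theorem inductive_loop_of_strictAnti
    (f : ℝ → ℝ)
    (hf : ContinuousOn f (Set.Icc (2 * π) (4 * π)))
    (hanti : StrictAntiOn f (Set.Icc (2 * π) (4 * π))) :
    0 < ∫ s in (2 * π)..(4 * π), f s * Real.sin (2 * s) :=
  inductive_loop_of_strictAnti_general f hanti
end

section
/- Let R₀(x) = (aR₋ + R₊e^{x})/(a + e^{x}) with a > 0 and R₊, R₋ ∈ ℝ. Then for every positive integer n and every Ω > 0, (1/2π) ∫_{2π}^{4π} R₀(sn/Ω) ds = R₊ + ((R₊−R₋)Ω/(2πn)) · ln( 1 + a(e^{−4πn/Ω} − e^{−2πn/Ω})/(1 + a e^{−2πn/Ω}) ). -/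
open Real MeasureTheory intervalIntegral

/-- **Explicit average of the exponential-drift resistance profile:**
`(1/2π) ∫_{2π}^{4π} R₀(sn/Ω) ds
  = R₊ + ((R₊-R₋)Ω/(2πn)) ln(1 + a(e^{-4πn/Ω} - e^{-2πn/Ω})/(1 + a e^{-2πn/Ω}))`. -/
theorem exponential_drift_resistance_average
    (a Rm Rp : ℝ) (ha : 0 < a)
    (R₀ : ℝ → ℝ)
    (hR₀ : ∀ x, R₀ x = (a * Rm + Rp * Real.exp x) / (a + Real.exp x))
    (n : ℕ) (hn : 0 < n) (Ω : ℝ) (hΩ : 0 < Ω) :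
    (1 / (2 * π)) * ∫ s in (2 * π)..(4 * π), R₀ (s * n / Ω) =
      Rp + (Rp - Rm) * Ω / (2 * π * n) *
        Real.log (1 + a * (Real.exp (-(4 * π * n) / Ω) - Real.exp (-(2 * π * n) / Ω)) /
          (1 + a * Real.exp (-(2 * π * n) / Ω))) := by
  have hn' : (0:ℝ) < (n:ℝ) := by exact_mod_cast hn
  set F : ℝ → ℝ := fun s => Rp * s + (Rp - Rm) * (Ω / n) *
      Real.log (1 + a * Real.exp (-(s * n / Ω))) with hF
  have hderiv : ∀ s ∈ Set.uIcc (2 * π) (4 * π),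
      HasDerivAt F (R₀ (s * n / Ω)) s := by
    intro s _
    have hpos : (0:ℝ) < 1 + a * Real.exp (-(s * n / Ω)) :=
      by positivity
    have h1 : HasDerivAt (fun s : ℝ => -(s * n / Ω)) (-(n / Ω)) s := by
      rw [show (fun s : ℝ => -(s * n / Ω)) = fun x : ℝ => x * (-((n:ℝ) / Ω)) from
        funext fun x => by ring]
      simpa using (hasDerivAt_id s).mul_const (-((n:ℝ)/Ω))
    have h2 : HasDerivAt (fun s : ℝ => 1 + a * Real.exp (-(s * n / Ω)))
        (a * Real.exp (-(s * n / Ω)) * (-(n / Ω))) s := by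
      simpa [mul_comm, mul_left_comm, mul_assoc] using
        ((h1.exp.const_mul a).const_add 1)
    have h3 : HasDerivAt F
        (Rp + (Rp - Rm) * (Ω / n) *
          (a * Real.exp (-(s * n / Ω)) * (-(n / Ω)) / (1 + a * Real.exp (-(s * n / Ω))))) s := by
      exact ((hasDerivAt_id s).const_mul Rp).add ((h2.log (ne_of_gt hpos)).const_mul _) |>.congr_deriv (by ring)
    refine h3.congr_deriv ?_
    rw [hR₀]
    have hex : Real.exp (-(s * n / Ω)) = (Real.exp (s * n / Ω))⁻¹ := by
      rw [Real.exp_neg]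
    have he : (0:ℝ) < Real.exp (s * n / Ω) := Real.exp_pos _
    rw [hex]
    have hd : (0:ℝ) < a + Real.exp (s * n / Ω) := by positivity
    have hd2 : (0:ℝ) < 1 + a * (Real.exp (s * n / Ω))⁻¹ := by positivity
    field_simp
    ring
  have hcont : IntervalIntegrable (fun s => R₀ (s * n / Ω)) volume (2 * π) (4 * π) := by
    apply Continuous.intervalIntegrable
    have : Continuous fun s : ℝ => (a * Rm + Rp * Real.exp (s * n / Ω)) / (a + Real.exp (s * n / Ω)) := by
      apply Continuous.div
      · continuity
      · continuity
      · intro s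
        have : (0:ℝ) < a + Real.exp (s * n / Ω) := by positivity
        exact ne_of_gt this
    exact this.congr fun s => (hR₀ _).symm
  rw [intervalIntegral.integral_eq_sub_of_hasDerivAt hderiv hcont]
  -- Now pure algebra
  have hE2 : (0:ℝ) < 1 + a * Real.exp (-(2 * π * n) / Ω) := by positivity
  have hE4 : (0:ℝ) < 1 + a * Real.exp (-(4 * π * n) / Ω) := by positivity
  have harg : 1 + a * (Real.exp (-(4 * π * n) / Ω) - Real.exp (-(2 * π * n) / Ω)) /
      (1 + a * Real.exp (-(2 * π * n) / Ω)) =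
      (1 + a * Real.exp (-(4 * π * n) / Ω)) / (1 + a * Real.exp (-(2 * π * n) / Ω)) := by
    field_simp
    ring
  rw [harg, Real.log_div (ne_of_gt hE4) (ne_of_gt hE2), hF]
  simp only
  rw [show -(4 * π * (n:ℝ) / Ω) = -(4 * π * n) / Ω by ring,
    show -(2 * π * (n:ℝ) / Ω) = -(2 * π * n) / Ω by ring]
  have hπ : (0:ℝ) < π := Real.pi_pos
  field_simp
  ring
end
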